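/- arXiv:1507.01386 — 10 statements merged into one kernel-verified Lean document; each statement's English description precedes it below -/
import Mathlib

section
/- Let g : ℝ → ℝ be such that D[g](x) := ∫_ℝ (g(x) - g(x-α))²/α² dα is finite. Then for all α > 0, the first-order Taylor remainder R₁(x,α) := (1/α)∫_{x-α}^{x} (g(z) - g(x)) dz satisfies |R₁(x,α)| ≤ C α^{1/2} (D[g](x))^{1/2} with the explicit constant C = 1/√3. -/
open Real MeasureTheory

theorem stmt_2 (g : ℝ → ℝ) (x : ℝ)
    (hg : Measurable g)
    (hD : Integrable (fun α : ℝ => (g x - g (x - α))^2 / α^2)) :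
    ∀ α : ℝ, 0 < α →
      |(1/α) * ∫ z in (x - α)..x, (g z - g x)| ≤
        (1 / Real.sqrt 3) * Real.sqrt α *
          Real.sqrt (∫ a : ℝ, (g x - g (x - a))^2 / a^2) := by
  intro α hα
  set μ : Measure ℝ := volume.restrict (Set.Ioc 0 α) with hμ
  set D : ℝ := ∫ a : ℝ, (g x - g (x - a))^2 / a^2 with hDdef
  have hDnn : 0 ≤ D := integral_nonneg fun a => by positivity
  -- step 1: change of variables
  have h1 : (∫ z in (x - α)..x, (g z - g x)) = ∫ a in (0:ℝ)..α, (g (x - a) - g x) := by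
    rw [intervalIntegral.integral_comp_sub_left (fun z => g z - g x) x]
    simp
  -- step 2: interval integral as set integral
  have h2 : (∫ a in (0:ℝ)..α, (g (x - a) - g x)) = ∫ a, (g (x - a) - g x) ∂μ := by
    rw [intervalIntegral.integral_of_le hα.le]
  -- Cauchy-Schwarz setup
  have hf : MemLp (fun a : ℝ => a) 2 μ := by
    refine (memLp_two_iff_integrable_sq measurable_id.aestronglyMeasurable).2 ?_
    exact (intervalIntegral.intervalIntegrable_pow 2).1
  have hmeas : Measurable (fun a : ℝ => |g x - g (x - a)| / a) := by
    exact ((hg.const_sub _).comp (measurable_const.sub measurable_id)).abs.div measurable_id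
  have hgm : MemLp (fun a : ℝ => |g x - g (x - a)| / a) 2 μ := by
    refine (memLp_two_iff_integrable_sq hmeas.aestronglyMeasurable).2 ?_
    have : (fun a : ℝ => (|g x - g (x - a)| / a)^2) = fun a : ℝ => (g x - g (x - a))^2 / a^2 := by
      funext a; rw [div_pow, sq_abs]
    rw [this]
    exact hD.restrict
  have h2e : ENNReal.ofReal (2:ℝ) = 2 := by norm_num
  have hCS := MeasureTheory.integral_mul_le_Lp_mul_Lq_of_nonneg (μ := μ) (p := 2) (q := 2)
      Real.HolderConjugate.two_two
      (f := fun a : ℝ => a) (g := fun a : ℝ => |g x - g (x - a)| / a)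
      ?_ ?_ (h2e ▸ hf) (h2e ▸ hgm)
  rotate_left
  · exact (ae_restrict_iff' measurableSet_Ioc).2 (Filter.Eventually.of_forall fun a ha => ha.1.le)
  · refine (ae_restrict_iff' measurableSet_Ioc).2 (Filter.Eventually.of_forall fun a ha => ?_)
    exact div_nonneg (abs_nonneg _) ha.1.le
  -- the product simplifies a.e.
  have hprod : (∫ a, a * (|g x - g (x - a)| / a) ∂μ) = ∫ a, |g (x - a) - g x| ∂μ := by
    refine integral_congr_ae ((ae_restrict_iff' measurableSet_Ioc).2
      (Filter.Eventually.of_forall fun a ha => ?_))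
    show a * (|g x - g (x - a)| / a) = |g (x - a) - g x|
    rw [mul_div_cancel₀ _ (ne_of_gt ha.1), abs_sub_comm]
  -- compute ∫ a^2
  have hfint : (∫ a, a ^ (2:ℝ) ∂μ) = α^3 / 3 := by
    have : (∫ a, a ^ (2:ℝ) ∂μ) = ∫ a in (0:ℝ)..α, a ^ 2 := by
      rw [intervalIntegral.integral_of_le hα.le]
      exact integral_congr_ae (Filter.Eventually.of_forall fun a => by
        show a ^ (2:ℝ) = a ^ (2:ℕ)
        rw [← Real.rpow_natCast a 2]; norm_num)
    rw [this, integral_pow]; norm_num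
  -- bound ∫ g^2 by D
  have hgint : (∫ a, (|g x - g (x - a)| / a) ^ (2:ℝ) ∂μ) ≤ D := by
    have heq : (∫ a, (|g x - g (x - a)| / a) ^ (2:ℝ) ∂μ)
        = ∫ a, (g x - g (x - a))^2 / a^2 ∂μ := by
      refine integral_congr_ae ((ae_restrict_iff' measurableSet_Ioc).2
        (Filter.Eventually.of_forall fun a ha => ?_))
      show (|g x - g (x - a)| / a) ^ (2:ℝ) = (g x - g (x - a))^2 / a^2
      rw [Real.rpow_two, div_pow, sq_abs]
    rw [heq]
    exact setIntegral_le_integral hD (Filter.Eventually.of_forall fun a => by positivity)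
  -- assemble
  have hnorm : |∫ a, (g (x - a) - g x) ∂μ| ≤ ∫ a, |g (x - a) - g x| ∂μ := by
    simpa using norm_integral_le_integral_norm (μ := μ) (fun a => g (x - a) - g x)
  have key : (∫ a, |g (x - a) - g x| ∂μ) ≤ (α^3/3) ^ (1/(2:ℝ)) * D ^ (1/(2:ℝ)) := by
    rw [← hprod]
    refine hCS.trans ?_
    rw [hfint]
    have hnn : 0 ≤ ∫ a, (|g x - g (x - a)| / a) ^ (2:ℝ) ∂μ :=
      integral_nonneg fun a => by rw [Real.rpow_two]; positivity
    gcongr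
  rw [abs_mul, h1, h2]
  have hsqrt : (α^3/3) ^ (1/(2:ℝ)) = α * Real.sqrt α / Real.sqrt 3 := by
    rw [← Real.sqrt_eq_rpow, Real.sqrt_div (by positivity) 3, pow_succ, pow_two,
      Real.sqrt_mul (by positivity), Real.sqrt_mul_self hα.le]
  calc |1/α| * |∫ a, (g (x - a) - g x) ∂μ|
      ≤ (1/α) * ((α^3/3) ^ (1/(2:ℝ)) * D ^ (1/(2:ℝ))) := by
        rw [abs_of_pos (by positivity)]
        exact mul_le_mul_of_nonneg_left (hnorm.trans key) (by positivity)
    _ = 1 / Real.sqrt 3 * Real.sqrt α * Real.sqrt D := by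
        rw [hsqrt, ← Real.sqrt_eq_rpow]
        field_simp
end

section
/- Let g : ℝ → ℝ with D[g](x) := ∫_ℝ (g(x) - g(x-α))²/α² dα finite at x. Then for all α > 0, the second-order remainder R₂(x,α) := (1/α)∫_{x-α}^{x}∫_{x}^{z} (g(w) - g(x)) dw dz satisfies |R₂(x,α)| ≤ C α^{3/2} (D[g](x))^{1/2} for some universal constant C > 0. -/
/-!
The outer integral averages the inner integrals `∫_x^z (g - g x)` over `z ∈ [x - α, x]`, so
`|R₂(x, α)| ≤ ∫_{x-α}^x |g w - g x| dw`. By Cauchy–Schwarz this is at most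
`√α · (∫_{x-α}^x (g w - g x)² dw)^{1/2}`, and for `w = x - a` with `0 < a ≤ α` we have
`(g w - g x)² ≤ α² (g x - g (x - a))² / a²`, so the last integral is at most `α² D[g](x)`.
Hence `C = 1` works.
-/

open Real MeasureTheory Set

theorem integral_abs_le_sqrt_measureReal_mul_sqrt_integral_sq {Ω : Type*} [MeasurableSpace Ω]
    {μ : Measure Ω} [IsFiniteMeasure μ] {f : Ω → ℝ} (hf : AEStronglyMeasurable f μ)
    (hf2 : Integrable (fun ω => f ω ^ 2) μ) :
    ∫ ω, |f ω| ∂μ ≤ √(μ.real univ) * √(∫ ω, f ω ^ 2 ∂μ) := by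
  have hL2 : MemLp (fun ω => |f ω|) (ENNReal.ofReal 2) μ := by
    simpa using ((memLp_two_iff_integrable_sq hf).2 hf2).norm
  have := integral_mul_le_Lp_mul_Lq_of_nonneg Real.HolderConjugate.two_two
    (ae_of_all _ fun ω => abs_nonneg (f ω))
    (ae_of_all _ fun _ => zero_le_one) hL2 (memLp_const 1)
  simpa [sqrt_eq_rpow, mul_comm] using this

theorem abs_integral_integral_le_mul_setIntegral_abs {f : ℝ → ℝ} {a b : ℝ} (hab : a ≤ b)
    (hf : IntegrableOn f (Ioc a b)) :
    |∫ z in a..b, ∫ w in b..z, f w| ≤ (b - a) * ∫ w in Ioc a b, |f w| := by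
  have hbound : ∀ z ∈ uIoc a b, ‖∫ w in b..z, f w‖ ≤ ∫ w in Ioc a b, |f w| := by
    intro z hz
    rw [uIoc_of_le hab] at hz
    calc ‖∫ w in b..z, f w‖ ≤ ∫ w in uIoc b z, ‖f w‖ :=
          intervalIntegral.norm_integral_le_integral_norm_uIoc
      _ ≤ ∫ w in Ioc a b, ‖f w‖ := by
        rw [uIoc_of_ge hz.2]
        exact setIntegral_mono_set hf.norm (ae_of_all _ fun _ => norm_nonneg _)
          (ae_of_all _ (Ioc_subset_Ioc_left hz.1.le))
      _ = ∫ w in Ioc a b, |f w| := by simp only [Real.norm_eq_abs]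
  simpa [abs_of_nonneg (sub_nonneg.2 hab), mul_comm] using
    intervalIntegral.norm_integral_le_of_norm_le_const hbound

section WeightedSquare

variable {h : ℝ → ℝ}

lemma le_sq_mul_div_sq {a α y : ℝ} (ha : a ∈ Ioc 0 α) (hy : 0 ≤ y) : y ≤ α ^ 2 * (y / a ^ 2) := by
  have ha0 : a ^ 2 ≠ 0 := pow_ne_zero 2 ha.1.ne'
  calc y = a ^ 2 * (y / a ^ 2) := (mul_div_cancel₀ y ha0).symm
    _ ≤ α ^ 2 * (y / a ^ 2) := by gcongr; exacts [ha.1.le, ha.2]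

theorem integrableOn_Ioc_of_integrable_div_sq (hm : AEStronglyMeasurable h) (h0 : 0 ≤ h)
    (hint : Integrable fun a => h a / a ^ 2) (α : ℝ) : IntegrableOn h (Ioc 0 α) := by
  refine ((hint.const_mul (α ^ 2)).integrableOn).mono' hm.restrict ?_
  filter_upwards [ae_restrict_mem measurableSet_Ioc] with a ha
  rw [Real.norm_of_nonneg (h0 a)]
  exact le_sq_mul_div_sq ha (h0 a)

theorem setIntegral_Ioc_le_sq_mul_integral_div_sq (hm : AEStronglyMeasurable h) (h0 : 0 ≤ h)
    (hint : Integrable fun a => h a / a ^ 2) (α : ℝ) :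
    ∫ a in Ioc 0 α, h a ≤ α ^ 2 * ∫ a, h a / a ^ 2 := by
  have hdiv0 : 0 ≤ fun a => h a / a ^ 2 := fun a => div_nonneg (h0 a) (sq_nonneg a)
  calc ∫ a in Ioc 0 α, h a ≤ ∫ a in Ioc 0 α, α ^ 2 * (h a / a ^ 2) :=
        setIntegral_mono_on (integrableOn_Ioc_of_integrable_div_sq hm h0 hint α)
          (hint.const_mul _).integrableOn measurableSet_Ioc fun a ha => le_sq_mul_div_sq ha (h0 a)
    _ ≤ α ^ 2 * ∫ a, h a / a ^ 2 := by
        rw [integral_const_mul]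
        exact mul_le_mul_of_nonneg_left (setIntegral_le_integral hint (ae_of_all _ hdiv0))
          (sq_nonneg α)

end WeightedSquare

theorem sq_sub_integrableOn_Ioc_and_setIntegral_le {g : ℝ → ℝ} {x α : ℝ} (hg : Measurable g)
    (hD : Integrable fun a => (g x - g (x - a)) ^ 2 / a ^ 2) (hα : 0 ≤ α) :
    IntegrableOn (fun w => (g w - g x) ^ 2) (Ioc (x - α) x) ∧
      ∫ w in Ioc (x - α) x, (g w - g x) ^ 2 ≤ α ^ 2 * ∫ a, (g x - g (x - a)) ^ 2 / a ^ 2 := by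
  set h : ℝ → ℝ := fun a => (g x - g (x - a)) ^ 2
  have hreflect : (fun w => (g w - g x) ^ 2) = fun w => h (x - w) := by
    ext w; simp only [h, sub_sub_cancel]; ring
  have hm : AEStronglyMeasurable h := by fun_prop
  have h0 : 0 ≤ h := fun a => sq_nonneg _
  have hI : IntervalIntegrable h volume 0 α :=
    (intervalIntegrable_iff_integrableOn_Ioc_of_le hα).2
      (integrableOn_Ioc_of_integrable_div_sq hm h0 hD α)
  have hIx : IntervalIntegrable (fun w => h (x - w)) volume (x - α) x := by
    simpa using (hI.comp_sub_left x).symm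
  have hxα : x - α ≤ x := sub_le_self x hα
  rw [hreflect]
  refine ⟨(intervalIntegrable_iff_integrableOn_Ioc_of_le hxα).1 hIx, ?_⟩
  rw [← intervalIntegral.integral_of_le hxα, intervalIntegral.integral_comp_sub_left, sub_self,
    sub_sub_cancel, intervalIntegral.integral_of_le hα]
  exact setIntegral_Ioc_le_sq_mul_integral_div_sq hm h0 hD α

theorem stmt_3 :
    ∃ C : ℝ, 0 < C ∧
      ∀ (g : ℝ → ℝ) (x : ℝ), Measurable g →
        Integrable (fun α : ℝ => (g x - g (x - α))^2 / α^2) →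
        ∀ α : ℝ, 0 < α →
          |(1/α) * ∫ z in (x - α)..x, ∫ w in x..z, (g w - g x)| ≤
            C * α ^ ((3:ℝ)/2) *
              Real.sqrt (∫ a : ℝ, (g x - g (x - a))^2 / a^2) := by
  refine ⟨1, one_pos, fun g x hg hD α hα => ?_⟩
  set D := ∫ a : ℝ, (g x - g (x - a))^2 / a^2
  obtain ⟨hf2, hJ⟩ := sq_sub_integrableOn_Ioc_and_setIntegral_le hg hD hα.le
  have hm : AEStronglyMeasurable (fun w => g w - g x) (volume.restrict (Ioc (x - α) x)) := by
    fun_prop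
  have hf : IntegrableOn (fun w => g w - g x) (Ioc (x - α) x) :=
    ((memLp_two_iff_integrable_sq hm).2 hf2).integrable one_le_two
  calc |(1/α) * ∫ z in (x - α)..x, ∫ w in x..z, (g w - g x)|
      ≤ (1 / α) * ((x - (x - α)) * ∫ w in Ioc (x - α) x, |g w - g x|) := by
        rw [abs_mul, abs_of_pos (one_div_pos.2 hα)]
        gcongr
        exact abs_integral_integral_le_mul_setIntegral_abs (by linarith) hf
    _ = ∫ w in Ioc (x - α) x, |g w - g x| := by field_simp; ring
    _ ≤ √α * √(∫ w in Ioc (x - α) x, (g w - g x) ^ 2) := by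
        simpa [hα.le] using integral_abs_le_sqrt_measureReal_mul_sqrt_integral_sq hm hf2
    _ ≤ √α * √(α ^ 2 * D) := by gcongr
    _ = 1 * α ^ ((3:ℝ)/2) * √D := by
        rw [sqrt_mul (sq_nonneg α), sqrt_sq hα.le, show (3:ℝ)/2 = 1 + 1/2 by norm_num,
          rpow_add hα, rpow_one, ← sqrt_eq_rpow]
        ring
end

section
/- Let 1 < p < 2 and g : ℝ → ℝ with D^p[g](x) := ∫_ℝ |g(x) - g(x-α)|^p/α² dα finite at x. Then for all α > 0, the remainder R₁(x,α) := (1/α)∫_{x-α}^x (g(z)-g(x)) dz satisfies |R₁(x,α)| ≤ C α^{1/p} (D^p[g](x))^{1/p} for a constant C depending only on p. -/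
open Real MeasureTheory

theorem stmt_4 (p : ℝ) (hp1 : 1 < p) (hp2 : p < 2) :
    ∃ C : ℝ, 0 < C ∧
      ∀ (g : ℝ → ℝ) (x : ℝ), Measurable g →
        Integrable (fun α : ℝ => |g x - g (x - α)| ^ p / α^2) →
        ∀ α : ℝ, 0 < α →
          |(1/α) * ∫ z in (x - α)..x, (g z - g x)| ≤
            C * α ^ (1/p) *
              (∫ a : ℝ, |g x - g (x - a)| ^ p / a^2) ^ (1/p) := by
  refine ⟨1, one_pos, fun g x hg Int α hα => ?_⟩
  have hp0 : 0 < p := lt_trans one_pos hp1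
  set q : ℝ := p / (p - 1) with hq
  have hpq : p.HolderConjugate q := Real.HolderConjugate.conjExponent hp1
  have hq0 : 0 < q := hpq.symm.pos
  set s : Set ℝ := Set.Ioc 0 α with hs
  set μ : Measure ℝ := volume.restrict s with hμ
  haveI : IsFiniteMeasure μ := ⟨by
    rw [hμ, Measure.restrict_apply_univ]; exact measure_Ioc_lt_top⟩
  set D : ℝ := ∫ a : ℝ, |g x - g (x - a)| ^ p / a ^ 2 with hD
  have hDnn : 0 ≤ D := integral_nonneg fun a =>
    div_nonneg (Real.rpow_nonneg (abs_nonneg _) _) (sq_nonneg _)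
  set F : ℝ → ℝ := fun β => |g x - g (x - β)| * |β| ^ (-(2/p)) with hF
  set G : ℝ → ℝ := fun β => |β| ^ (2/p) with hG
  have hFnn : ∀ β, 0 ≤ F β := fun β =>
    mul_nonneg (abs_nonneg _) (Real.rpow_nonneg (abs_nonneg _) _)
  have hGnn : ∀ β, 0 ≤ G β := fun β => Real.rpow_nonneg (abs_nonneg _) _
  have hFm : Measurable F :=
    ((measurable_const.sub (hg.comp (measurable_const.sub measurable_id))).abs).mul
      (measurable_id.abs.pow measurable_const)
  have hGm : Measurable G := measurable_id.abs.pow measurable_const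
  -- F^p equals the integrand on s
  have hFp : ∀ β ∈ s, F β ^ p = |g x - g (x - β)| ^ p / β ^ 2 := by
    intro β hβ
    have hβ0 : 0 < β := hβ.1
    have habs : |β| = β := abs_of_pos hβ0
    have h1 : (|β| ^ (-(2/p))) ^ p = β ^ (-(2:ℝ)) := by
      rw [habs, ← Real.rpow_mul hβ0.le]
      congr 1
      field_simp
    have h2 : β ^ (-(2:ℝ)) = (β ^ 2)⁻¹ := by
      rw [Real.rpow_neg hβ0.le]
      norm_num [Real.rpow_natCast β 2]
    show (|g x - g (x - β)| * |β| ^ (-(2/p))) ^ p = _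
    rw [Real.mul_rpow (abs_nonneg _) (Real.rpow_nonneg (abs_nonneg _) _), h1, h2,
      div_eq_mul_inv]
  -- F * G equals |g x - g (x-β)| on s
  have hFG : ∀ β ∈ s, F β * G β = |g x - g (x - β)| := by
    intro β hβ
    have hβ0 : 0 < β := hβ.1
    have : |β| ^ (-(2/p)) * |β| ^ (2/p) = 1 := by
      rw [← Real.rpow_add (abs_pos.2 hβ0.ne')]
      norm_num
    simp only [hF, hG, mul_assoc, this, mul_one]
  -- Integrability of F^p on μ
  have hIntFp : Integrable (fun β => F β ^ p) μ := by
    refine (Int.restrict (s := s)).congr ?_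
    filter_upwards [ae_restrict_mem (measurableSet_Ioc : MeasurableSet s)] with β hβ
    exact (hFp β hβ).symm
  -- Memℒp F p μ
  have hPne0 : ENNReal.ofReal p ≠ 0 := by
    simp [ENNReal.ofReal_eq_zero, not_le, hp0]
  have hPnetop : ENNReal.ofReal p ≠ ⊤ := ENNReal.ofReal_ne_top
  have hFmem : MemLp F (ENNReal.ofReal p) μ := by
    have hiff := memLp_norm_rpow_iff (p := ENNReal.ofReal p) (q := ENNReal.ofReal p)
      (hFm.aestronglyMeasurable : AEStronglyMeasurable F μ) hPne0 hPnetop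
    rw [ENNReal.div_self hPne0 hPnetop] at hiff
    refine hiff.1 ?_
    rw [memLp_one_iff_integrable]
    refine hIntFp.congr ?_
    filter_upwards with β
    rw [Real.norm_of_nonneg (hFnn β), ENNReal.toReal_ofReal hp0.le]
  -- Memℒp G q μ
  have hGmem : MemLp G (ENNReal.ofReal q) μ := by
    refine MemLp.of_bound (hGm.aestronglyMeasurable) (α ^ (2/p)) ?_
    filter_upwards [ae_restrict_mem (measurableSet_Ioc : MeasurableSet s)] with β hβ
    rw [Real.norm_of_nonneg (hGnn β)]
    show |β| ^ (2/p) ≤ α ^ (2/p)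
    rw [abs_of_pos hβ.1]
    exact Real.rpow_le_rpow hβ.1.le hβ.2 (by positivity)
  -- Hölder
  have holder := integral_mul_le_Lp_mul_Lq_of_nonneg hpq
    (Filter.Eventually.of_forall hFnn) (Filter.Eventually.of_forall hGnn) hFmem hGmem
  -- bound on ∫ F^p
  have hFpD : ∫ β, F β ^ p ∂μ ≤ D := by
    have h1 : ∫ β, F β ^ p ∂μ = ∫ β in s, |g x - g (x - β)| ^ p / β ^ 2 := by
      refine setIntegral_congr_fun measurableSet_Ioc fun β hβ => hFp β hβ
    rw [h1]
    exact setIntegral_le_integral Int (Filter.Eventually.of_forall fun a =>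
      div_nonneg (Real.rpow_nonneg (abs_nonneg _) _) (sq_nonneg _))
  -- bound on ∫ G^q
  have hGq : ∫ β, G β ^ q ∂μ ≤ α ^ (2*q/p) * α := by
    have hbound : ∀ β ∈ s, G β ^ q ≤ α ^ (2*q/p) := by
      intro β hβ
      show (|β| ^ (2/p)) ^ q ≤ _
      rw [abs_of_pos hβ.1, ← Real.rpow_mul hβ.1.le]
      calc β ^ (2/p*q) ≤ α ^ (2/p*q) :=
            Real.rpow_le_rpow hβ.1.le hβ.2 (by positivity)
        _ = α ^ (2*q/p) := by ring_nf
    calc ∫ β, G β ^ q ∂μ ≤ ∫ _, α ^ (2*q/p) ∂μ := by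
          refine integral_mono_ae ?_ (integrable_const _) ?_
          · refine (hGmem.integrable_norm_rpow (by simp [ENNReal.ofReal_eq_zero, not_le, hq0])
              ENNReal.ofReal_ne_top).congr ?_
            filter_upwards with β
            rw [Real.norm_of_nonneg (hGnn β), ENNReal.toReal_ofReal hq0.le]
          · filter_upwards [ae_restrict_mem (measurableSet_Ioc : MeasurableSet s)] with β hβ
            exact hbound β hβ
      _ = α ^ (2*q/p) * α := by
          rw [integral_const, hμ, measureReal_def, Measure.restrict_apply_univ, hs, Real.volume_Ioc,
            smul_eq_mul, sub_zero, ENNReal.toReal_ofReal hα.le, mul_comm]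
  -- combine
  have hGq' : (∫ β, G β ^ q ∂μ) ^ (1/q) ≤ α * α ^ (1/p) := by
    have h1 : (∫ β, G β ^ q ∂μ) ^ (1/q) ≤ (α ^ (2*q/p) * α) ^ (1/q) :=
      Real.rpow_le_rpow (integral_nonneg fun β => Real.rpow_nonneg (hGnn β) _) hGq
        (by positivity)
    refine h1.trans_eq ?_
    have e1 : α ^ (2*q/p) * α = α ^ (2*q/p + 1) := by
      rw [Real.rpow_add hα, Real.rpow_one]
    have hp1' : p - 1 ≠ 0 := by linarith
    have e2 : (2*q/p + 1) * (1/q) = 1 + 1/p := by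
      rw [hq]; field_simp; ring
    rw [e1, ← Real.rpow_mul hα.le, e2, Real.rpow_add hα, Real.rpow_one]
  have hFp' : (∫ β, F β ^ p ∂μ) ^ (1/p) ≤ D ^ (1/p) :=
    Real.rpow_le_rpow (integral_nonneg fun β => Real.rpow_nonneg (hFnn β) _) hFpD
      (by positivity)
  -- the interval integral
  have hsub : (∫ z in (x - α)..x, (g z - g x)) = ∫ β in (0:ℝ)..α, (g (x - β) - g x) := by
    rw [intervalIntegral.integral_comp_sub_left (fun z => g z - g x) x]
    norm_num
  have habs : |∫ β in (0:ℝ)..α, (g (x - β) - g x)| ≤ ∫ β, F β * G β ∂μ := by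
    refine (intervalIntegral.abs_integral_le_integral_abs hα.le).trans ?_
    rw [intervalIntegral.integral_of_le hα.le]
    refine le_of_eq (setIntegral_congr_fun measurableSet_Ioc fun β hβ => ?_).symm
    rw [hFG β hβ, abs_sub_comm]
  have key : |∫ z in (x - α)..x, (g z - g x)| ≤ D ^ (1/p) * (α * α ^ (1/p)) := by
    rw [hsub]
    refine habs.trans (holder.trans ?_)
    exact mul_le_mul hFp' hGq'
      (Real.rpow_nonneg (integral_nonneg fun β => Real.rpow_nonneg (hGnn β) _) _)
      (Real.rpow_nonneg hDnn _)
  rw [abs_mul, abs_of_pos (by positivity : (0:ℝ) < 1/α)]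
  calc 1/α * |∫ z in (x - α)..x, (g z - g x)|
      ≤ 1/α * (D ^ (1/p) * (α * α ^ (1/p))) := by
        exact mul_le_mul_of_nonneg_left key (by positivity)
    _ = 1 * α ^ (1/p) * D ^ (1/p) := by field_simp
end

section
/- Nonlinear lower bound for the dissipation: let f : ℝ → ℝ be twice continuously differentiable with |f'(x)| ≤ B for all x, and suppose D[f''](x) := ∫_ℝ (f''(x)-f''(x-α))²/α² dα is finite at some x. Then D_f[f''](x) := ∫_ℝ (f''(x)-f''(x-α))²/((f(x)-f(x-α))² + α²) dα ≥ |f''(x)|³ / (24 B (1 + B²)). -/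
open Real MeasureTheory

private lemma stmt8_aux (B α Δ H : ℝ) (hB : 0 < B) (hΔ : Δ^2 ≤ B^2*α^2) (hα : α ≠ 0) :
    (1/(1+B^2)) * (H^2/α^2) ≤ H^2/(Δ^2+α^2) := by
  have hα2 : (0:ℝ) < α^2 := by positivity
  have hden : (0:ℝ) < Δ^2 + α^2 := by positivity
  have hden2 : Δ^2 + α^2 ≤ (1 + B^2) * α^2 := by nlinarith
  calc (1/(1+B^2)) * (H^2/α^2) = H^2 / ((1 + B^2) * α^2) := by
        field_simp
    _ ≤ H^2 / (Δ^2 + α^2) := div_le_div_of_nonneg_left (sq_nonneg _) hden hden2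

private lemma stmt8_aux2 (A B : ℝ) (hB : 0 < B) :
    A^3/(24*B*(1+B^2)) = (1/(1+B^2)) * (A^3/(24*B)) := by
  field_simp

set_option maxHeartbeats 1000000 in
theorem stmt_8 (f : ℝ → ℝ) (B : ℝ) (hB : 0 < B)
    (hf : ContDiff ℝ 2 f)
    (hf' : ∀ x, |deriv f x| ≤ B)
    (x : ℝ)
    (hD : (∫⁻ α : ℝ, ENNReal.ofReal
        ((deriv (deriv f) x - deriv (deriv f) (x - α))^2 / α^2)) < ⊤) :
    ENNReal.ofReal (|deriv (deriv f) x| ^ 3 / (24 * B * (1 + B^2))) ≤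
      ∫⁻ α : ℝ, ENNReal.ofReal
        ((deriv (deriv f) x - deriv (deriv f) (x - α))^2 /
          ((f x - f (x - α))^2 + α^2)) := by
  set g := deriv (deriv f) with hg
  -- smoothness facts
  have h2 := contDiff_succ_iff_deriv.mp
    (show ContDiff ℝ ((1:WithTop ℕ∞)+1) f by norm_num; exact hf)
  have hfd : Differentiable ℝ f := h2.1
  have h1 := contDiff_one_iff_deriv.mp h2.2.2
  have hf'd : Differentiable ℝ (deriv f) := h1.1
  have hgc : Continuous g := h1.2
  -- Lipschitz bound for f
  have hlip : ∀ a b : ℝ, |f a - f b| ≤ B * |a - b| := by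
    intro a b
    have := Convex.norm_image_sub_le_of_norm_deriv_le (f := f) (s := Set.univ)
      (fun y _ => hfd y) (fun y _ => by simpa [Real.norm_eq_abs] using hf' y)
      convex_univ (Set.mem_univ b) (Set.mem_univ a)
    simpa [Real.norm_eq_abs] using this
  set A := |g x| with hA
  rcases eq_or_lt_of_le (abs_nonneg (g x)) with hA0 | hA0
  · rw [hA, ← hA0]
    simp
  -- notation
  set h : ℝ → ℝ := fun α => g x - g (x - α) with hh
  set φ : ℝ → ℝ := fun α => (h α)^2 / α^2 with hφ
  have hφnn : ∀ α, 0 ≤ φ α := fun α => div_nonneg (sq_nonneg _) (sq_nonneg _)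
  have hhc : Continuous h := continuous_const.sub (hgc.comp (continuous_const.sub continuous_id))
  have hφm : Measurable φ := ((hhc.pow 2).measurable).div ((continuous_id.pow 2).measurable)
  -- integrability of φ
  have hφint : Integrable φ := by
    refine ⟨hφm.aestronglyMeasurable, ?_⟩
    exact (hasFiniteIntegral_iff_ofReal (Filter.Eventually.of_forall hφnn)).mpr hD
  set I := ∫ α, φ α with hI
  have hInn : 0 ≤ I := integral_nonneg hφnn
  have hlint : (∫⁻ α, ENNReal.ofReal (φ α)) = ENNReal.ofReal I :=
    (ofReal_integral_eq_lintegral_ofReal hφint (Filter.Eventually.of_forall hφnn)).symm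
  -- parameters
  set r := 6*B/A with hr
  have hrpos : 0 < r := by positivity
  set c := A^3/(18*B^2) with hc
  have hcpos : 0 < c := by positivity
  -- FTC computation
  have hF : ∫ α in (0:ℝ)..r, g (x - α) = deriv f x - deriv f (x - r) := by
    rw [intervalIntegral.integral_comp_sub_left (fun t => g t) x]
    simp only [sub_zero]
    exact intervalIntegral.integral_deriv_eq_sub (fun y _ => hf'd y)
      (hgc.intervalIntegrable _ _)
  have hgcc : Continuous fun α : ℝ => g (x - α) := hgc.comp (by continuity)
  have hih : ∫ α in (0:ℝ)..r, h α = r * g x - (deriv f x - deriv f (x - r)) := by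
    have : (∫ α in (0:ℝ)..r, h α) =
        (∫ α in (0:ℝ)..r, g x) - ∫ α in (0:ℝ)..r, g (x - α) := by
      rw [← intervalIntegral.integral_sub intervalIntegrable_const
        (hgcc.intervalIntegrable _ _)]
    rw [this, hF]
    simp [smul_eq_mul, mul_comm]
  -- lower bound on |∫ h|
  have habs : r * A - 2 * B ≤ |∫ α in (0:ℝ)..r, h α| := by
    rw [hih]
    have h1 : |r * g x| - |deriv f x - deriv f (x - r)| ≤
        |r * g x - (deriv f x - deriv f (x - r))| := abs_sub_abs_le_abs_sub _ _
    have h2 : |deriv f x - deriv f (x - r)| ≤ 2 * B := by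
      calc |deriv f x - deriv f (x - r)| ≤ |deriv f x| + |deriv f (x - r)| := abs_sub _ _
        _ ≤ 2 * B := by have := hf' x; have := hf' (x - r); linarith
    have h3 : |r * g x| = r * A := by
      rw [abs_mul, abs_of_pos hrpos]
    linarith
  set J := ∫ α in Set.Ioc (0:ℝ) r, |h α| with hJ
  have hJint : IntegrableOn (fun α => |h α|) (Set.Ioc 0 r) := by
    exact (hhc.abs.integrableOn_Ioc)
  have hJge : r * A - 2 * B ≤ J := by
    refine le_trans habs ?_
    rw [intervalIntegral.integral_of_le hrpos.le]
    calc |∫ α in Set.Ioc (0:ℝ) r, h α| ≤ ∫ α in Set.Ioc (0:ℝ) r, |h α| := by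
          simpa [Real.norm_eq_abs] using
            norm_integral_le_integral_norm (μ := volume.restrict (Set.Ioc (0:ℝ) r)) h
      _ = J := rfl
  -- pointwise AM-GM bound on (0, r]
  have hpt : ∀ α ∈ Set.Ioc (0:ℝ) r, 2*c*|h α| - c^2*α^2 ≤ φ α := by
    intro α hα
    have hαpos : (0:ℝ) < α := hα.1
    rw [hφ]
    have hα2 : (0:ℝ) < α^2 := by positivity
    rw [le_div_iff₀ hα2]
    nlinarith [sq_nonneg (|h α| - c*α^2), sq_abs (h α), sq_nonneg (h α)]
  -- integrate the pointwise bound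
  have hSle : ∫ α in Set.Ioc (0:ℝ) r, (2*c*|h α| - c^2*α^2) ≤ ∫ α in Set.Ioc (0:ℝ) r, φ α := by
    refine setIntegral_mono_on ?_ (hφint.integrableOn) measurableSet_Ioc hpt
    have hcont : Continuous fun α : ℝ => 2*c*|h α| - c^2*α^2 := by
      apply Continuous.sub
      · exact continuous_const.mul hhc.abs
      · exact continuous_const.mul (continuous_pow 2)
    exact hcont.integrableOn_Ioc
  have hsq : ∫ α in Set.Ioc (0:ℝ) r, α^2 = r^3/3 := by
    rw [← intervalIntegral.integral_of_le hrpos.le]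
    simp
    ring
  have hc2int : IntegrableOn (fun α : ℝ => c^2*α^2) (Set.Ioc 0 r) :=
    (continuous_const.mul (continuous_pow 2)).integrableOn_Ioc
  have h2cint : IntegrableOn (fun α : ℝ => 2*c*|h α|) (Set.Ioc 0 r) :=
    (continuous_const.mul hhc.abs).integrableOn_Ioc
  have hSval : ∫ α in Set.Ioc (0:ℝ) r, (2*c*|h α| - c^2*α^2) = 2*c*J - c^2*(r^3/3) := by
    rw [integral_sub h2cint hc2int, integral_const_mul, integral_const_mul, hsq]
  have hStoI : ∫ α in Set.Ioc (0:ℝ) r, φ α ≤ I :=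
    integral_mono_measure Measure.restrict_le_self (Filter.Eventually.of_forall hφnn) hφint
  -- numeric conclusion : I ≥ A^3/(24B)
  have hrA : r * A = 6 * B := by rw [hr]; field_simp; exact div_self (ne_of_gt hA0)
  have hJ4 : 4 * B ≤ J := by linarith
  have hAne : A ≠ 0 := ne_of_gt (by exact hA0)
  have hBne : B ≠ 0 := ne_of_gt hB
  have hA3 : (0:ℝ) < A^3 := by positivity
  have hcr : c^2*(r^3/3) = 2*A^3/(9*B) := by
    rw [hc, hr]; field_simp; ring
  have hkey : A^3/(24*B) ≤ I := by
    have h5 : 2*c*(4*B) - c^2*(r^3/3) ≤ I := by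
      have := mul_le_mul_of_nonneg_left hJ4 (by positivity : (0:ℝ) ≤ 2*c)
      linarith
    have e1 : 2*c*(4*B) - 2*A^3/(9*B) = 2*A^3/(9*B) := by
      rw [hc]; field_simp; ring
    have h6 : A^3/(24*B) ≤ 2*c*(4*B) - c^2*(r^3/3) := by
      rw [hcr, e1, div_le_div_iff₀ (by positivity) (by positivity)]
      nlinarith [hA3, hB]
    linarith
  -- pass to the original integral
  set K := 1/(1+B^2) with hK
  have hKpos : 0 < K := by positivity
  have hptK : ∀ α : ℝ, ENNReal.ofReal (K * φ α) ≤
      ENNReal.ofReal ((h α)^2 / ((f x - f (x - α))^2 + α^2)) := by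
    intro α
    apply ENNReal.ofReal_le_ofReal
    rcases eq_or_ne α 0 with rfl | hα
    · have hz : φ 0 = 0 := by simp [hφ]
      rw [hz, mul_zero]
      positivity
    · have hα2 : (0:ℝ) < α^2 := by positivity
      have hΔ : (f x - f (x - α))^2 ≤ B^2 * α^2 := by
        have h7 := hlip x (x - α)
        have h8 : x - (x - α) = α := by ring
        rw [h8] at h7
        have h9 := pow_le_pow_left₀ (abs_nonneg (f x - f (x - α))) h7 2
        rwa [sq_abs, mul_pow, sq_abs] at h9
      rw [hK, hφ]
      exact stmt8_aux B α _ _ hB hΔ hα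
  calc ENNReal.ofReal (A ^ 3 / (24 * B * (1 + B^2)))
      ≤ ENNReal.ofReal (K * I) := by
        apply ENNReal.ofReal_le_ofReal
        rw [hK, stmt8_aux2 A B hB]
        exact mul_le_mul_of_nonneg_left hkey hKpos.le
    _ = ENNReal.ofReal K * ENNReal.ofReal I := ENNReal.ofReal_mul hKpos.le
    _ = ENNReal.ofReal K * ∫⁻ α, ENNReal.ofReal (φ α) := by rw [hlint]
    _ = ∫⁻ α, ENNReal.ofReal K * ENNReal.ofReal (φ α) :=
        (lintegral_const_mul' _ _ ENNReal.ofReal_ne_top).symm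
    _ = ∫⁻ α, ENNReal.ofReal (K * φ α) := by
        simp_rw [← ENNReal.ofReal_mul hKpos.le]
    _ ≤ _ := lintegral_mono hptK
end

section
/- Let f : ℝ → ℝ be C² with |f'(x)| ≤ B, let p ∈ (1,2), and suppose D^p_f[f''](x) := ∫_ℝ |f''(x)-f''(x-α)|^p/((f(x)-f(x-α))²+α²) dα is finite at x. Then D^p_f[f''](x) ≥ |f''(x)|^{p+1} / (96 B (1 + B²)). -/
/-!
The denominator is at most `(1 + B²) α²` by the mean value theorem, and by convexity the numerator
`|f''(x) - f''(x - α)|^p` lies above the tangent line of `|·|^p` at `f''(x)`, which is affine in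
`f''(x - α)`. Integrating this lower bound over `[R, 4R]`, the constant term contributes
`|f''(x)|^p · 3 / (4R)`, while the term linear in `f''(x - α)` integrates by parts against `α⁻²`
to `O(B / R²)` because `f'` is bounded. The choice `R = 48 B / |f''(x)|` makes the first term win.
-/

open Real MeasureTheory intervalIntegral Set

theorem convexOn_abs_rpow {p : ℝ} (hp : 1 ≤ p) : ConvexOn ℝ univ fun t : ℝ => |t| ^ p := by
  refine ⟨convex_univ, fun a _ b _ u v hu hv huv => ?_⟩
  simp only [smul_eq_mul]
  calc |u * a + v * b| ^ p ≤ (u * |a| + v * |b|) ^ p := by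
        gcongr
        calc |u * a + v * b| ≤ |u * a| + |v * b| := abs_add_le _ _
          _ = u * |a| + v * |b| := by rw [abs_mul, abs_mul, abs_of_nonneg hu, abs_of_nonneg hv]
    _ ≤ u * |a| ^ p + v * |b| ^ p :=
        (convexOn_rpow hp).2 (abs_nonneg a) (abs_nonneg b) hu hv huv

theorem ConvexOn.add_mul_sub_le_of_hasDerivAt {f : ℝ → ℝ} {f' c : ℝ}
    (hf : ConvexOn ℝ univ f) (hc : HasDerivAt f f' c) (a : ℝ) :
    f c + f' * (a - c) ≤ f a := by
  rcases lt_trichotomy c a with hca | rfl | hac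
  · have h := hf.le_slope_of_hasDerivAt (mem_univ c) (mem_univ a) hca hc
    rw [slope_def_field, le_div_iff₀ (sub_pos.2 hca)] at h
    linarith
  · simp
  · have h := hf.slope_le_of_hasDerivAt (mem_univ a) (mem_univ c) hac hc
    rw [slope_def_field, div_le_iff₀ (sub_pos.2 hac)] at h
    linarith

theorem abs_rpow_add_mul_sub_le {p : ℝ} (hp : 1 < p) (c a : ℝ) :
    |c| ^ p + p * |c| ^ (p - 2) * c * (a - c) ≤ |a| ^ p :=
  (convexOn_abs_rpow hp.le).add_mul_sub_le_of_hasDerivAt (hasDerivAt_abs_rpow c hp) a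

theorem sq_sub_add_sq_le_of_abs_deriv_le {f : ℝ → ℝ} {B : ℝ} (hf : Differentiable ℝ f)
    (hf' : ∀ y, |deriv f y| ≤ B) (x α : ℝ) :
    (f x - f (x - α)) ^ 2 + α ^ 2 ≤ (1 + B ^ 2) * α ^ 2 := by
  have hlip : |f x - f (x - α)| ≤ B * |α| := by
    simpa using convex_univ.norm_image_sub_le_of_norm_deriv_le (fun y _ => hf y)
      (fun y _ => hf' y) (mem_univ (x - α)) (mem_univ x)
  have := pow_le_pow_left₀ (abs_nonneg _) hlip 2
  rw [mul_pow, sq_abs, sq_abs] at this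
  linarith

theorem tangent_div_le_abs_sub_rpow_div {f : ℝ → ℝ} {B p : ℝ} (hp : 1 < p)
    (hf : Differentiable ℝ f) (hf' : ∀ y, |deriv f y| ≤ B) (c s x α : ℝ) :
    (|c| ^ p - p * |c| ^ (p - 2) * c * s) / ((1 + B ^ 2) * α ^ 2) ≤
      |c - s| ^ p / ((f x - f (x - α)) ^ 2 + α ^ 2) := by
  rcases eq_or_ne α 0 with rfl | hα
  · rw [zero_pow two_ne_zero, mul_zero, div_zero]
    positivity
  have htangent := abs_rpow_add_mul_sub_le hp c (c - s)
  exact div_le_div₀ (by positivity) (by linarith) (by positivity)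
    (sq_sub_add_sq_le_of_abs_deriv_le hf hf' x α)

theorem integral_inv_sq_of_pos {a b : ℝ} (ha : 0 < a) (hab : a ≤ b) :
    ∫ t in a..b, (t ^ 2)⁻¹ = a⁻¹ - b⁻¹ := by
  have hpos : ∀ t ∈ uIcc a b, 0 < t := fun t ht =>
    ha.trans_le (uIcc_of_le hab ▸ ht).1
  have hderiv : ∀ t ∈ uIcc a b, HasDerivAt (fun t : ℝ => -t⁻¹) (t ^ 2)⁻¹ t := fun t ht => by
    simpa using (hasDerivAt_inv (hpos t ht).ne').fun_neg
  have hcont : ContinuousOn (fun t : ℝ => (t ^ 2)⁻¹) (uIcc a b) :=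
    (continuousOn_pow 2).inv₀ fun t ht => pow_ne_zero 2 (hpos t ht).ne'
  rw [integral_eq_sub_of_hasDerivAt hderiv hcont.intervalIntegrable]
  ring

theorem abs_integral_div_sq_le {φ φ' : ℝ → ℝ} {a b B : ℝ} (ha : 0 < a) (hab : a ≤ b)
    (hφ : ∀ t ∈ Icc a b, HasDerivAt φ (φ' t) t) (hφ' : IntervalIntegrable φ' volume a b)
    (hφB : ∀ t ∈ Icc a b, |φ t| ≤ B) :
    |∫ t in a..b, φ' t / t ^ 2| ≤ 2 * B / a ^ 2 := by
  rw [← uIcc_of_le hab] at hφ hφB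
  have hpos : ∀ t ∈ uIcc a b, 0 < t := fun t ht =>
    ha.trans_le (uIcc_of_le hab ▸ ht).1
  set u : ℝ → ℝ := fun t => (t ^ 2)⁻¹
  set u' : ℝ → ℝ := fun t => -(2 * (t ^ 3)⁻¹)
  have hu : ∀ t ∈ uIcc a b, HasDerivAt u (u' t) t := fun t ht => by
    have ht0 := (hpos t ht).ne'
    refine ((hasDerivAt_pow 2 t).fun_inv (pow_ne_zero 2 ht0)).congr_deriv ?_
    simp only [u']
    field_simp
    ring
  have hu'c : ContinuousOn u' (uIcc a b) := fun t ht =>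
    (((continuousAt_id.pow 3).inv₀ (pow_ne_zero 3 (hpos t ht).ne')).const_mul 2).neg
      |>.continuousWithinAt
  have hparts : ∫ t in a..b, φ' t / t ^ 2 = u b * φ b - u a * φ a - ∫ t in a..b, u' t * φ t := by
    rw [← integral_mul_deriv_eq_deriv_mul hu hφ hu'c.intervalIntegrable hφ']
    simp only [u, div_eq_inv_mul]
  have hrest : |∫ t in a..b, u' t * φ t| ≤ B * (u a - u b) := by
    calc |∫ t in a..b, u' t * φ t| ≤ ∫ t in a..b, B * -u' t := by
          rw [← Real.norm_eq_abs]
          refine norm_integral_le_of_norm_le (g := fun t => B * -u' t) hab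
            (ae_of_all _ fun t ht => ?_) (continuousOn_const.mul hu'c.neg).intervalIntegrable
          have ht' : t ∈ uIcc a b := uIcc_of_le hab ▸ Ioc_subset_Icc_self ht
          have : u' t < 0 := by
            have := hpos t ht'
            simp only [u', neg_neg_iff_pos]
            positivity
          rw [Real.norm_eq_abs, abs_mul, abs_of_neg this, mul_comm]
          exact mul_le_mul_of_nonneg_right (hφB t ht') (by linarith)
      _ = B * (u a - u b) := by
          rw [intervalIntegral.integral_const_mul, intervalIntegral.integral_neg,
            integral_eq_sub_of_hasDerivAt hu hu'c.intervalIntegrable]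
          ring
  have hboundary : ∀ t ∈ uIcc a b, |u t * φ t| ≤ u t * B := fun t ht => by
    rw [abs_mul, abs_of_nonneg (by simp only [u]; positivity)]
    exact mul_le_mul_of_nonneg_left (hφB t ht) (by simp only [u]; positivity)
  have ha' := hboundary a left_mem_uIcc
  have hb' := hboundary b right_mem_uIcc
  rw [hparts, div_eq_mul_inv]
  calc |u b * φ b - u a * φ a - ∫ t in a..b, u' t * φ t|
      ≤ |u b * φ b| + |u a * φ a| + |∫ t in a..b, u' t * φ t| :=
        (abs_sub _ _).trans (add_le_add_left (abs_sub _ _) _)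
    _ ≤ 2 * B * u a := by linarith


theorem abs_integral_deriv_deriv_sub_div_sq_le {f : ℝ → ℝ} {B a b : ℝ}
    (hf : ContDiff ℝ 2 f) (hf' : ∀ y, |deriv f y| ≤ B) (x : ℝ) (ha : 0 < a) (hab : a ≤ b) :
    |∫ α in a..b, deriv (deriv f) (x - α) / α ^ 2| ≤ 2 * B / a ^ 2 := by
  have hf1 : ContDiff ℝ 1 (deriv f) := hf.deriv' (n := 1)
  have hs : Continuous fun α => deriv (deriv f) (x - α) :=
    (hf1.continuous_deriv le_rfl).comp (continuous_sub_left x)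
  refine abs_integral_div_sq_le (φ := fun α => -deriv f (x - α)) ha hab (fun α _ => ?_)
    (hs.intervalIntegrable _ _) (fun α _ => by simpa using hf' (x - α))
  simpa using ((hf1.differentiable one_ne_zero (x - α)).hasDerivAt.comp α
    ((hasDerivAt_id α).const_sub x)).fun_neg

theorem integral_sub_mul_div_mul_sq {a b κ K C : ℝ} {s : ℝ → ℝ} (ha : 0 < a) (hab : a ≤ b)
    (hs : ContinuousOn s (Icc a b)) :
    ∫ t in a..b, (κ - K * s t) / (C * t ^ 2) =
      (κ * (a⁻¹ - b⁻¹) - K * ∫ t in a..b, s t / t ^ 2) / C := by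
  have hcont : ContinuousOn (fun t : ℝ => (t ^ 2)⁻¹) (uIcc a b) :=
    (continuousOn_pow 2).inv₀ fun t ht => pow_ne_zero 2 (ha.trans_le (uIcc_of_le hab ▸ ht).1).ne'
  have hsint : IntervalIntegrable (fun t => s t / t ^ 2) volume a b := by
    simp only [div_eq_mul_inv]
    exact ((uIcc_of_le hab ▸ hs).mul hcont).intervalIntegrable
  have hpt : ∀ t, (κ - K * s t) / (C * t ^ 2) = (κ * (t ^ 2)⁻¹ - K * (s t / t ^ 2)) / C :=
    fun t => by
      rw [mul_comm C, ← div_div]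
      ring
  simp only [hpt]
  rw [intervalIntegral.integral_div, integral_sub (hcont.intervalIntegrable.const_mul _)
    (hsint.const_mul _), intervalIntegral.integral_const_mul,
    intervalIntegral.integral_const_mul, integral_inv_sq_of_pos ha hab]

theorem le_integral_tangent_div_sq {p B c R : ℝ} {s : ℝ → ℝ} (hp0 : 0 ≤ p) (hp2 : p ≤ 2)
    (hB : 0 < B) (hc : c ≠ 0) (hR : R * |c| = 48 * B) (hs : ContinuousOn s (Icc R (4 * R)))
    (hsR : |∫ t in R..4 * R, s t / t ^ 2| ≤ 2 * B / R ^ 2) :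
    |c| ^ (p + 1) / (96 * B * (1 + B ^ 2)) ≤
      ∫ t in R..4 * R, (|c| ^ p - p * |c| ^ (p - 2) * c * s t) / ((1 + B ^ 2) * t ^ 2) := by
  set m := |c|
  have hm : 0 < m := abs_pos.2 hc
  have hRpos : 0 < R := pos_of_mul_pos_left (hR ▸ by positivity) hm.le
  set K := p * m ^ (p - 2) * c
  rw [integral_sub_mul_div_mul_sq hRpos (by linarith) hs]
  set A := m ^ (p - 1)
  have hA : 0 < A := by positivity
  have hmp : m ^ p = A * m := by
    rw [← rpow_add_one hm.ne']
    ring_nf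
  have hmp1 : m ^ (p + 1) = A * m ^ 2 := by
    rw [← rpow_natCast, ← rpow_add hm]
    ring_nf
  have hK : |K| ≤ 2 * A := by
    have : |K| = p * A := by
      rw [abs_mul, abs_mul, abs_of_nonneg hp0, abs_of_pos (by positivity : 0 < m ^ (p - 2)),
        mul_assoc, ← rpow_add_one hm.ne', show p - 2 + 1 = p - 1 by ring]
    rw [this]
    exact mul_le_mul_of_nonneg_right hp2 hA.le
  have hKI : K * ∫ t in R..4 * R, s t / t ^ 2 ≤ 2 * A * (2 * B / R ^ 2) :=
    (le_abs_self _).trans (abs_mul K _ ▸ mul_le_mul hK hsR (abs_nonneg _) (by positivity))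
  have hRinv : R⁻¹ = m / (48 * B) := by
    rw [eq_div_iff (by positivity), ← hR]
    field_simp
  have hgain : A * m * (R⁻¹ - (4 * R)⁻¹) - 2 * A * (2 * B / R ^ 2) = A * m ^ 2 / (72 * B) := by
    rw [mul_inv, div_eq_mul_inv _ (R ^ 2), ← inv_pow, hRinv]
    field_simp
    ring
  rw [hmp1, hmp, ← div_div, div_le_div_iff_of_pos_right (by positivity)]
  calc A * m ^ 2 / (96 * B) ≤ A * m ^ 2 / (72 * B) := by gcongr; norm_num
    _ = A * m * (R⁻¹ - (4 * R)⁻¹) - 2 * A * (2 * B / R ^ 2) := hgain.symm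
    _ ≤ _ := by linarith

theorem ofReal_setIntegral_le_lintegral {X : Type*} [MeasurableSpace X] {μ : Measure X}
    {s : Set X} {g F : X → ℝ} (hg : IntegrableOn g s μ) (hgF : ∀ x, g x ≤ F x) :
    ENNReal.ofReal (∫ x in s, g x ∂μ) ≤ ∫⁻ x, ENNReal.ofReal (F x) ∂μ :=
  calc ENNReal.ofReal (∫ x in s, g x ∂μ)
      ≤ ENNReal.ofReal (∫ x in s, max (g x) 0 ∂μ) :=
        ENNReal.ofReal_le_ofReal (integral_mono hg hg.pos_part fun x => le_max_left _ _)
    _ = ∫⁻ x in s, ENNReal.ofReal (max (g x) 0) ∂μ :=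
        ofReal_integral_eq_lintegral_ofReal hg.pos_part (ae_of_all _ fun x => le_max_right _ _)
    _ ≤ ∫⁻ x in s, ENNReal.ofReal (F x) ∂μ :=
        lintegral_mono fun x => by
          rw [ENNReal.ofReal_max, ENNReal.ofReal_zero]
          exact max_le (ENNReal.ofReal_le_ofReal (hgF x)) zero_le
    _ ≤ ∫⁻ x, ENNReal.ofReal (F x) ∂μ := setLIntegral_le_lintegral _ _

theorem stmt_9_general (f : ℝ → ℝ) (B p : ℝ) (hB : 0 < B)
    (hp1 : 1 < p) (hp2 : p < 2)
    (hf : ContDiff ℝ 2 f)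
    (hf' : ∀ x, |deriv f x| ≤ B)
    (x : ℝ) :
    ENNReal.ofReal (|deriv (deriv f) x| ^ (p + 1) / (96 * B * (1 + B^2))) ≤
      ∫⁻ α : ℝ, ENNReal.ofReal
        (|deriv (deriv f) x - deriv (deriv f) (x - α)| ^ p /
          ((f x - f (x - α))^2 + α^2)) := by
  set c := deriv (deriv f) x
  rcases eq_or_ne c 0 with hc | hc
  · simp [hc, zero_rpow (by positivity : p + 1 ≠ 0)]
  have hs : Continuous fun α => deriv (deriv f) (x - α) :=
    ((hf.deriv' (n := 1)).continuous_deriv le_rfl).comp (continuous_sub_left x)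
  set R := 48 * B / |c|
  have hR : R * |c| = 48 * B := div_mul_cancel₀ _ (abs_ne_zero.2 hc)
  have hRpos : 0 < R := by positivity
  have hR4 : R ≤ 4 * R := by linarith
  have hmain := le_integral_tangent_div_sq (by linarith) hp2.le hB hc hR hs.continuousOn
    (abs_integral_deriv_deriv_sub_div_sq_le hf hf' x hRpos hR4)
  rw [integral_of_le hR4] at hmain
  refine (ENNReal.ofReal_le_ofReal hmain).trans (ofReal_setIntegral_le_lintegral ?_
    fun α => tangent_div_le_abs_sub_rpow_div hp1 (hf.differentiable two_ne_zero) hf' c _ x α)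
  refine (ContinuousOn.integrableOn_Icc ?_).mono_set Ioc_subset_Icc_self
  refine (continuous_const.sub (continuous_const.mul hs)).continuousOn.div (by fun_prop) ?_
  intro α hα
  have := hRpos.trans_le hα.1
  positivity

theorem stmt_9 (f : ℝ → ℝ) (B p : ℝ) (hB : 0 < B)
    (hp1 : 1 < p) (hp2 : p < 2)
    (hf : ContDiff ℝ 2 f)
    (hf' : ∀ x, |deriv f x| ≤ B)
    (x : ℝ)
    (hD : (∫⁻ α : ℝ, ENNReal.ofReal
        (|deriv (deriv f) x - deriv (deriv f) (x - α)| ^ p /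
          ((f x - f (x - α))^2 + α^2))) < ⊤) :
    ENNReal.ofReal (|deriv (deriv f) x| ^ (p + 1) / (96 * B * (1 + B^2))) ≤
      ∫⁻ α : ℝ, ENNReal.ofReal
        (|deriv (deriv f) x - deriv (deriv f) (x - α)| ^ p /
          ((f x - f (x - α))^2 + α^2)) :=
  stmt_9_general f B p hB hp1 hp2 hf hf' x
end

section
/- Let f : ℝ → ℝ be C² with |f'(x)| ≤ B and f'' ∈ L^p(ℝ) for some p ∈ (1,∞). Then for every x, D_f[f''](x) := ∫_ℝ (f''(x)-f''(x-α))²/((f(x)-f(x-α))²+α²) dα ≥ |f''(x)|^{2+p} / (8^p ‖f''‖_{L^p}^p (1+B²)). -/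
/-!
Put `c = |f''(x)|`. By Chebyshev's inequality the set of `α` with `|f''(x - α)| ≥ c/2` has
measure at most `R = (2‖f''‖_p / c)^p`, so at least half of `[-R, R]` consists of `α` with
`|f''(x) - f''(x - α)| ≥ c/2`. There the denominator is at most `(1 + B²) R²`, because `f` is
`B`-Lipschitz, and integrating over this set gives
`c² / (4 (1 + B²) R) ≥ c^(2+p) / (8^p ‖f''‖_p^p (1 + B²))`.
-/

open Real MeasureTheory
open scoped ENNReal

theorem meas_le_abs_le_ofReal_div_rpow {X : Type*} [MeasurableSpace X] {μ : Measure X}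
    {g : X → ℝ} {p ε : ℝ} (hp : 0 < p) (hε : 0 < ε) (hg : MemLp g (ENNReal.ofReal p) μ) :
    μ {y | ε ≤ |g y|} ≤
      ENNReal.ofReal (((eLpNorm g (ENNReal.ofReal p) μ).toReal / ε) ^ p) := by
  have hcheb := meas_ge_le_mul_pow_eLpNorm_enorm μ (by simpa using hp) ENNReal.ofReal_ne_top
    hg.1 (ε := ENNReal.ofReal ε) (by simpa using hε) (by simp)
  rw [ENNReal.toReal_ofReal hp.le, ← ENNReal.ofReal_toReal hg.eLpNorm_lt_top.ne,
    ← ENNReal.ofReal_inv_of_pos hε, ENNReal.ofReal_rpow_of_pos (inv_pos.2 hε),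
    ENNReal.ofReal_rpow_of_nonneg ENNReal.toReal_nonneg hp.le,
    ← ENNReal.ofReal_mul (by positivity), ← Real.mul_rpow (by positivity) ENNReal.toReal_nonneg,
    inv_mul_eq_div] at hcheb
  refine le_trans (measure_mono fun y hy => ?_) hcheb
  simpa [← ofReal_norm] using ENNReal.ofReal_le_ofReal hy

theorem sq_div_le_sq_div_sq_add_sq {a d y α B R : ℝ} (ha : 0 ≤ a) (had : a ≤ |d|)
    (hy : |y| ≤ B * |α|) (hαR : |α| ≤ R) (hα : α ≠ 0) :
    a ^ 2 / ((1 + B ^ 2) * R ^ 2) ≤ d ^ 2 / (y ^ 2 + α ^ 2) := by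
  have hnum : a ^ 2 ≤ d ^ 2 := by simpa using pow_le_pow_left₀ ha had 2
  have hy2 : y ^ 2 ≤ B ^ 2 * α ^ 2 := by
    simpa [mul_pow] using pow_le_pow_left₀ (abs_nonneg y) hy 2
  have hα2 : α ^ 2 ≤ R ^ 2 := by simpa using pow_le_pow_left₀ (abs_nonneg α) hαR 2
  have hden : y ^ 2 + α ^ 2 ≤ (1 + B ^ 2) * R ^ 2 := by
    nlinarith [mul_le_mul_of_nonneg_left hα2 (sq_nonneg B)]
  exact div_le_div₀ (sq_nonneg d) hnum (by positivity) hden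

theorem ofReal_le_volume_Icc_diff {S : Set ℝ} {R : ℝ} (hR : 0 ≤ R)
    (hS : volume S ≤ ENNReal.ofReal R) :
    ENNReal.ofReal R ≤ volume (Set.Icc (-R) R \ S) := by
  calc ENNReal.ofReal R = ENNReal.ofReal (R - -R) - ENNReal.ofReal R := by
        rw [← ENNReal.ofReal_sub _ hR]; ring_nf
    _ ≤ volume (Set.Icc (-R) R) - volume S := by rw [Real.volume_Icc]; gcongr
    _ ≤ volume (Set.Icc (-R) R \ S) := le_measure_sdiff

theorem ofReal_div_le_lintegral_of_volume_le {f g : ℝ → ℝ} {B R : ℝ} (x : ℝ)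
    (hf : ∀ a b, |f a - f b| ≤ B * |a - b|) (hg : Measurable g) (hR : 0 < R)
    (hbad : volume {α | |g x| / 2 ≤ |g (x - α)|} ≤ ENNReal.ofReal R) :
    ENNReal.ofReal (|g x| ^ 2 / (4 * (1 + B ^ 2) * R)) ≤
      ∫⁻ α, ENNReal.ofReal ((g x - g (x - α)) ^ 2 / ((f x - f (x - α)) ^ 2 + α ^ 2)) := by
  set Bad := {α | |g x| / 2 ≤ |g (x - α)|}
  set A := Set.Icc (-R) R \ Bad
  set K := (|g x| / 2) ^ 2 / ((1 + B ^ 2) * R ^ 2)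
  have hA : MeasurableSet A :=
    measurableSet_Icc.diff (measurableSet_le measurable_const
      (hg.comp (measurable_const.sub measurable_id)).abs)
  have hK : ∀ α ∈ A,
      K ≤ (g x - g (x - α)) ^ 2 / ((f x - f (x - α)) ^ 2 + α ^ 2) := by
    rintro α ⟨hαR, hαgood⟩
    simp only [Bad, Set.mem_ofPred_eq, not_le] at hαgood
    have hα : α ≠ 0 := by rintro rfl; simp at hαgood; linarith [abs_nonneg (g x)]
    refine sq_div_le_sq_div_sq_add_sq (by positivity) ?_ ?_ (abs_le.2 hαR) hα
    · linarith [abs_sub_abs_le_abs_sub (g x) (g (x - α))]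
    · simpa using hf x (x - α)
  have hKR : |g x| ^ 2 / (4 * (1 + B ^ 2) * R) = K * R := by
    simp only [K]
    field_simp
    ring
  rw [hKR, ENNReal.ofReal_mul (by positivity)]
  calc ENNReal.ofReal K * ENNReal.ofReal R ≤ ENNReal.ofReal K * volume A := by
        gcongr; exact ofReal_le_volume_Icc_diff hR.le hbad
    _ = ∫⁻ α, A.indicator (fun _ => ENNReal.ofReal K) α :=
        (lintegral_indicator_const hA _).symm
    _ ≤ _ := lintegral_mono fun α => by
        by_cases hα : α ∈ A
        · simpa [Set.indicator_of_mem hα] using ENNReal.ofReal_le_ofReal (hK α hα)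
        · simp [Set.indicator_of_notMem hα]

theorem rpow_div_le_sq_div_div_rpow {c N D p : ℝ} (hc : 0 < c) (hN : 0 < N) (hD : 0 < D)
    (hp : 1 ≤ p) :
    c ^ (2 + p) / (8 ^ p * N ^ p * D) ≤ c ^ 2 / (4 * D * (2 * N / c) ^ p) := by
  have h8 : (8 : ℝ) ^ p = 2 ^ p * 4 ^ p := by
    rw [← Real.mul_rpow (by norm_num) (by norm_num)]; norm_num
  have h4 : (4 : ℝ) ≤ 4 ^ p := by
    simpa using Real.rpow_le_rpow_of_exponent_le (by norm_num : (1 : ℝ) ≤ 4) hp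
  rw [Real.rpow_add hc, Real.rpow_two, Real.div_rpow (by positivity) hc.le,
    Real.mul_rpow (by norm_num) hN.le, h8]
  have hcp : 0 < c ^ p := by positivity
  rw [div_le_div_iff₀ (by positivity) (by positivity)]
  field_simp
  gcongr

theorem stmt_10_general (f : ℝ → ℝ) (B p : ℝ) (hp1 : 1 < p)
    (hf : ContDiff ℝ 2 f)
    (hf' : ∀ x, |deriv f x| ≤ B)
    (hLp : MemLp (deriv (deriv f)) (ENNReal.ofReal p) volume) :
    ∀ x : ℝ,
      ENNReal.ofReal (|deriv (deriv f) x| ^ (2 + p) /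
          ((8:ℝ) ^ p * (eLpNorm (deriv (deriv f)) (ENNReal.ofReal p) volume).toReal ^ p *
            (1 + B^2))) ≤
        ∫⁻ α : ℝ, ENNReal.ofReal
          ((deriv (deriv f) x - deriv (deriv f) (x - α))^2 /
            ((f x - f (x - α))^2 + α^2)) := by
  intro x
  set g := deriv (deriv f)
  set N := (eLpNorm g (ENNReal.ofReal p) volume).toReal
  have hp : 0 < p := zero_lt_one.trans hp1
  rcases (abs_nonneg (g x)).eq_or_lt with hc | hc
  · simp [← hc, Real.zero_rpow (by positivity : 2 + p ≠ 0)]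
  rcases (ENNReal.toReal_nonneg : 0 ≤ N).eq_or_lt with hN | hN
  · simp [N, ← hN, Real.zero_rpow hp.ne']
  have hlip : ∀ a b, |f a - f b| ≤ B * |a - b| := fun a b =>
    Convex.norm_image_sub_le_of_norm_deriv_le
      (fun _ _ => (hf.differentiable two_ne_zero).differentiableAt) (fun y _ => hf' y)
      convex_univ (Set.mem_univ b) (Set.mem_univ a)
  have hreflect : MeasurePreserving (fun α : ℝ => x - α) volume volume :=
    Measure.measurePreserving_sub_left volume x
  have hbad :
      volume {α | |g x| / 2 ≤ |g (x - α)|} ≤ ENNReal.ofReal ((2 * N / |g x|) ^ p) := by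
    have := meas_le_abs_le_ofReal_div_rpow hp (half_pos hc) (hLp.comp_measurePreserving hreflect)
    rw [eLpNorm_comp_measurePreserving hLp.1 hreflect, div_div_eq_mul_div,
      mul_comm _ (2 : ℝ)] at this
    exact this
  calc _ ≤ ENNReal.ofReal (|g x| ^ 2 / (4 * (1 + B ^ 2) * (2 * N / |g x|) ^ p)) :=
        ENNReal.ofReal_le_ofReal (rpow_div_le_sq_div_div_rpow hc hN (by positivity) hp1.le)
    _ ≤ _ := ofReal_div_le_lintegral_of_volume_le x hlip (measurable_deriv _) (by positivity) hbad

theorem stmt_10 (f : ℝ → ℝ) (B p : ℝ) (hB : 0 < B) (hp1 : 1 < p)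
    (hf : ContDiff ℝ 2 f)
    (hf' : ∀ x, |deriv f x| ≤ B)
    (hLp : MemLp (deriv (deriv f)) (ENNReal.ofReal p) volume) :
    ∀ x : ℝ,
      ENNReal.ofReal (|deriv (deriv f) x| ^ (2 + p) /
          ((8:ℝ) ^ p * (eLpNorm (deriv (deriv f)) (ENNReal.ofReal p) volume).toReal ^ p *
            (1 + B^2))) ≤
        ∫⁻ α : ℝ, ENNReal.ofReal
          ((deriv (deriv f) x - deriv (deriv f) (x - α))^2 /
            ((f x - f (x - α))^2 + α^2)) :=
  stmt_10_general f B p hp1 hf hf' hLp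
end

section
/- Let f : ℝ → ℝ be C³ with |f'(x)| ≤ B for all x and ‖f''‖_∞ < ∞, and suppose D[f'''](x) is finite. Then D_f[f'''](x) := ∫_ℝ (f'''(x)-f'''(x-α))²/((f(x)-f(x-α))²+α²) dα ≥ |f'''(x)|³ / (24 ‖f''‖_∞ (1+B²)). -/
open Real MeasureTheory

lemma cs_aux {r : ℝ} (hr : 0 < r) {h : ℝ → ℝ} (hh : Continuous h) :
    (∫ a in Set.Ioc 0 r, h a) ^ 2 ≤ r * ∫ a in Set.Ioc 0 r, (h a) ^ 2 := by
  set μ := volume.restrict (Set.Ioc (0:ℝ) r) with hμ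
  haveI : IsFiniteMeasure μ := by
    constructor
    rw [hμ, Measure.restrict_apply_univ, Real.volume_Ioc]
    exact ENNReal.ofReal_lt_top
  obtain ⟨C, hC⟩ := (isCompact_Icc (a := (0:ℝ)) (b := r)).exists_bound_of_continuousOn
    hh.continuousOn
  have hmem : MemLp h (ENNReal.ofReal 2) μ := by
    refine (memLp_top_of_bound hh.aestronglyMeasurable C ?_).mono_exponent le_top
    filter_upwards [ae_restrict_mem (measurableSet_Ioc)] with a ha
    exact hC a (Set.Ioc_subset_Icc_self ha)
  have hone : MemLp (fun _ : ℝ => (1:ℝ)) (ENNReal.ofReal 2) μ :=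
    (memLp_top_of_bound aestronglyMeasurable_const 1 (by simp)).mono_exponent le_top
  have hpq : Real.HolderConjugate 2 2 := Real.holderConjugate_iff.mpr ⟨one_lt_two, by norm_num⟩
  have H := integral_mul_norm_le_Lp_mul_Lq (μ := μ) hpq hmem hone
  simp only [norm_one, mul_one, Real.norm_eq_abs, one_pow] at H
  norm_num at H
  have h2 : (μ Set.univ).toReal = r := by
    rw [hμ, Measure.restrict_apply_univ, Real.volume_Ioc]
    simp [ENNReal.toReal_ofReal hr.le]
  rw [measureReal_def, h2] at H
  have habs : |∫ a in Set.Ioc 0 r, h a| ≤ ∫ a, |h a| ∂μ := by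
    rw [← Real.norm_eq_abs]
    exact (norm_integral_le_integral_norm h).trans (le_of_eq (by simp [Real.norm_eq_abs, hμ]))
  have hnn : (0:ℝ) ≤ ∫ a in Set.Ioc 0 r, (h a)^2 :=
    integral_nonneg fun a => sq_nonneg _
  calc (∫ a in Set.Ioc 0 r, h a) ^ 2 = |∫ a in Set.Ioc 0 r, h a| ^ 2 := (sq_abs _).symm
    _ ≤ ((∫ a in Set.Ioc 0 r, (h a)^2) ^ ((1:ℝ)/2) * r ^ ((1:ℝ)/2)) ^ 2 := by
        apply pow_le_pow_left₀ (abs_nonneg _) (habs.trans H)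
    _ = r * ∫ a in Set.Ioc 0 r, (h a)^2 := by
        rw [mul_pow, ← Real.rpow_natCast (_ ^ ((1:ℝ)/2)) 2, ← Real.rpow_natCast (r ^ ((1:ℝ)/2)) 2,
          ← Real.rpow_mul hnn, ← Real.rpow_mul hr.le]
        norm_num [mul_comm]

lemma bdd_of_continuous {g : ℝ → ℝ} (hg : Continuous g) (hfin : eLpNorm g ⊤ volume < ⊤) :
    ∀ y, |g y| ≤ (eLpNorm g ⊤ volume).toReal := by
  set M := (eLpNorm g ⊤ volume).toReal with hM
  have hae : ∀ᵐ y, |g y| ≤ M := by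
    have h1 : ∀ᵐ y, (‖g y‖₊ : ENNReal) ≤ eLpNormEssSup g volume := ae_le_eLpNormEssSup
    filter_upwards [h1] with y hy
    have : (‖g y‖₊ : ENNReal).toReal ≤ (eLpNormEssSup g volume).toReal := by
      refine ENNReal.toReal_mono ?_ hy
      rw [← eLpNorm_exponent_top]
      exact hfin.ne
    simpa [hM, eLpNorm_exponent_top, Real.norm_eq_abs] using this
  by_contra hcon
  push_neg at hcon
  obtain ⟨y, hy⟩ := hcon
  have hopen : IsOpen {z | M < |g z|} := isOpen_lt continuous_const (continuous_abs.comp hg)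
  have hpos : 0 < volume {z | M < |g z|} := hopen.measure_pos volume ⟨y, hy⟩
  have : volume {z | M < |g z|} = 0 := by
    have := hae
    rw [ae_iff] at this
    convert this using 2
    ext z; simp [not_le]
  exact absurd this hpos.ne'

lemma key_aux {g2 g3 : ℝ → ℝ} (hg3 : Continuous g3)
    (hd : ∀ y, HasDerivAt g2 (g3 y) y) {M : ℝ} (hb : ∀ y, |g2 y| ≤ M)
    (x : ℝ) (hg0 : g3 x ≠ 0) (hM : 0 < M) :
    M * |g3 x| ≤ ∫ a in Set.Ioc 0 (4*M/|g3 x|), (g3 x - g3 (x - a))^2 := by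
  set G := |g3 x| with hG
  have hGpos : 0 < G := abs_pos.mpr hg0
  set r := 4*M/G with hr'
  have hr : 0 < r := by positivity
  have hcont2 : Continuous fun a : ℝ => g3 (x - a) := by fun_prop
  have hcont : Continuous (fun a : ℝ => g3 x - g3 (x - a)) := by fun_prop
  have I1 : ∫ a in Set.Ioc 0 r, (g3 x - g3 (x - a)) = r * g3 x - (g2 x - g2 (x - r)) := by
    rw [← intervalIntegral.integral_of_le hr.le,
      intervalIntegral.integral_sub intervalIntegrable_const (hcont2.intervalIntegrable 0 r),
      intervalIntegral.integral_const, intervalIntegral.integral_comp_sub_left (fun t => g3 t) x,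
      intervalIntegral.integral_eq_sub_of_hasDerivAt (fun y _ => hd y)
        (hg3.intervalIntegrable _ _)]
    simp [smul_eq_mul]
  have I2 : 2 * M ≤ |∫ a in Set.Ioc 0 r, (g3 x - g3 (x - a))| := by
    rw [I1]
    have h1 : |r * g3 x| = 4 * M := by
      rw [abs_mul, abs_of_pos hr, ← hG, hr']
      field_simp
    have h2 : |g2 x - g2 (x - r)| ≤ 2 * M := by
      calc |g2 x - g2 (x - r)| ≤ |g2 x| + |g2 (x - r)| := abs_sub _ _
        _ ≤ M + M := add_le_add (hb x) (hb (x - r))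
        _ = 2 * M := by ring
    have := abs_sub_abs_le_abs_sub (r * g3 x) (g2 x - g2 (x - r))
    linarith [h1 ▸ this]
  have hcs := cs_aux hr hcont
  set S := ∫ a in Set.Ioc 0 r, (g3 x - g3 (x - a))^2 with hS
  set A := ∫ a in Set.Ioc 0 r, (g3 x - g3 (x - a)) with hA
  have hA2 : 4 * M^2 ≤ A^2 := by
    have := sq_abs A
    nlinarith [I2, abs_nonneg A]
  have h3 : 4 * M^2 ≤ r * S := le_trans hA2 hcs
  rw [hr'] at h3
  have h4 := mul_le_mul_of_nonneg_right h3 hGpos.le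
  have h5 : 4*M/G*S*G = 4*M*S := by field_simp
  rw [h5] at h4
  nlinarith

lemma main_aux (F g2 g3 : ℝ → ℝ) (B M : ℝ) (hB : 0 < B) (hMpos : 0 < M)
    (hc3 : Continuous g3) (hd : ∀ y, HasDerivAt g2 (g3 y) y) (hb : ∀ y, |g2 y| ≤ M)
    (hFc : Continuous F) (hlip : ∀ u v : ℝ, |F u - F v| ≤ B * |u - v|)
    (x : ℝ) :
    ENNReal.ofReal (|g3 x| ^ 3 / (24 * M * (1 + B^2))) ≤
      ∫⁻ α : ℝ, ENNReal.ofReal ((g3 x - g3 (x - α))^2 / ((F x - F (x - α))^2 + α^2)) := by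
  by_cases hg0 : g3 x = 0
  · simp [hg0]
  set G := |g3 x| with hGdef
  have hGpos : 0 < G := abs_pos.mpr hg0
  set r := 4 * M / G with hrdef
  have hrpos : 0 < r := by positivity
  set C := (1 + B^2) * r^2 with hCdef
  have hCpos : 0 < C := by positivity
  have hkey : M * G ≤ ∫ a in Set.Ioc 0 r, (g3 x - g3 (x - a))^2 := key_aux hc3 hd hb x hg0 hMpos
  have hnum_cont : Continuous fun a : ℝ => (g3 x - g3 (x - a))^2 := by fun_prop
  have hlip2 : ∀ a : ℝ, (F x - F (x - a))^2 ≤ B^2 * a^2 := by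
    intro a
    have h2 : |F x - F (x - a)| ≤ B * |a| := by
      simpa using hlip x (x - a)
    nlinarith [sq_abs (F x - F (x - a)), sq_abs a, abs_nonneg (F x - F (x - a)), abs_nonneg a]
  have hreal : G ^ 3 / (24 * M * (1 + B^2)) ≤ ∫ a in Set.Ioc 0 r, (g3 x - g3 (x - a))^2 / C := by
    rw [integral_div]
    have e1 : (M * G) / C = G^3 / (16 * M * (1 + B^2)) := by
      rw [hCdef, hrdef]
      field_simp
      ring
    have e2 : G ^ 3 / (24 * M * (1 + B^2)) ≤ G^3 / (16 * M * (1 + B^2)) :=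
      div_le_div_of_nonneg_left (by positivity) (by positivity) (by nlinarith)
    refine e2.trans ?_
    rw [← e1]
    exact div_le_div_of_nonneg_right hkey hCpos.le
  calc ENNReal.ofReal (G ^ 3 / (24 * M * (1 + B^2)))
      ≤ ENNReal.ofReal (∫ a in Set.Ioc 0 r, (g3 x - g3 (x - a))^2 / C) :=
        ENNReal.ofReal_le_ofReal hreal
    _ ≤ ∫⁻ a in Set.Ioc 0 r, ENNReal.ofReal ((g3 x - g3 (x - a))^2 / C) := by
        rw [integral_eq_lintegral_of_nonneg_ae
          (Filter.Eventually.of_forall fun a => by positivity)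
          ((hnum_cont.div_const C).aestronglyMeasurable)]
        exact ENNReal.ofReal_toReal_le
    _ ≤ ∫⁻ a in Set.Ioc 0 r, ENNReal.ofReal
          ((g3 x - g3 (x - a))^2 / ((F x - F (x - a))^2 + a^2)) := by
        refine setLIntegral_mono ?_ ?_
        · have hden : Continuous fun a : ℝ => (F x - F (x - a))^2 + a^2 := by fun_prop
          exact (hnum_cont.measurable.div hden.measurable).ennreal_ofReal
        · intro a ha
          refine ENNReal.ofReal_le_ofReal ?_
          have ha0 : 0 < a := ha.1
          have har : a ≤ r := ha.2
          have hden_pos : 0 < (F x - F (x - a))^2 + a^2 := by positivity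
          have hden_le : (F x - F (x - a))^2 + a^2 ≤ C := by
            have := hlip2 a
            have ha2 : a^2 ≤ r^2 := by nlinarith
            rw [hCdef]; nlinarith
          exact div_le_div_of_nonneg_left (by positivity) hden_pos hden_le
    _ ≤ ∫⁻ a : ℝ, ENNReal.ofReal
          ((g3 x - g3 (x - a))^2 / ((F x - F (x - a))^2 + a^2)) :=
        setLIntegral_le_lintegral _ _

theorem stmt_11 (f : ℝ → ℝ) (B : ℝ) (hB : 0 < B)
    (hf : ContDiff ℝ 3 f)
    (hf' : ∀ x, |deriv f x| ≤ B)
    (hf'' : eLpNorm (deriv (deriv f)) ⊤ volume < ⊤)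
    (x : ℝ)
    (hD : (∫⁻ α : ℝ, ENNReal.ofReal
        ((deriv (deriv (deriv f)) x - deriv (deriv (deriv f)) (x - α))^2 / α^2)) < ⊤) :
    ENNReal.ofReal (|deriv (deriv (deriv f)) x| ^ 3 /
        (24 * (eLpNorm (deriv (deriv f)) ⊤ volume).toReal * (1 + B^2))) ≤
      ∫⁻ α : ℝ, ENNReal.ofReal
        ((deriv (deriv (deriv f)) x - deriv (deriv (deriv f)) (x - α))^2 /
          ((f x - f (x - α))^2 + α^2)) := by
  by_cases hM0 : (eLpNorm (deriv (deriv f)) ⊤ volume).toReal = 0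
  · rw [hM0]
    simp
  have hMpos : 0 < (eLpNorm (deriv (deriv f)) ⊤ volume).toReal :=
    lt_of_le_of_ne ENNReal.toReal_nonneg (Ne.symm hM0)
  have hf3 : ContDiff ℝ ((0 + 3 : ℕ) : WithTop ℕ∞) f := by exact_mod_cast hf
  have hf12 : ContDiff ℝ ((1 + 2 : ℕ) : WithTop ℕ∞) f := by exact_mod_cast hf
  have hc3 : Continuous (deriv (deriv (deriv f))) :=
    (ContDiff.iterate_deriv' 0 3 hf3).continuous
  have hg2cd : ContDiff ℝ 1 (deriv (deriv f)) := by
    have h := ContDiff.iterate_deriv' 1 2 hf12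
    exact_mod_cast h
  have hg2diff : Differentiable ℝ (deriv (deriv f)) := hg2cd.differentiable one_ne_zero
  have hd : ∀ y, HasDerivAt (deriv (deriv f)) (deriv (deriv (deriv f)) y) y :=
    fun y => (hg2diff y).hasDerivAt
  have hb : ∀ y, |deriv (deriv f) y| ≤ (eLpNorm (deriv (deriv f)) ⊤ volume).toReal :=
    bdd_of_continuous hg2cd.continuous hf''
  have hfd : Differentiable ℝ f := hf.differentiable (by norm_num)
  have hlip : ∀ u v : ℝ, |f u - f v| ≤ B * |u - v| := by
    intro u v
    have h1 : ‖f u - f v‖ ≤ B * ‖u - v‖ :=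
      Convex.norm_image_sub_le_of_norm_deriv_le (fun y _ => (hfd y))
        (fun y _ => by simpa [Real.norm_eq_abs] using hf' y) convex_univ (Set.mem_univ _)
        (Set.mem_univ _)
    simpa [Real.norm_eq_abs] using h1
  exact main_aux f (deriv (deriv f)) (deriv (deriv (deriv f))) B
    ((eLpNorm (deriv (deriv f)) ⊤ volume).toReal) hB hMpos hc3 hd hb hfd.continuous hlip x
end

section
/- If φ : ℝ → ℝ is convex and differentiable and g : ℝ → ℝ is bounded and measurable, then for the nonlocal operator L_f[h](x) := p.v. ∫_ℝ (h(x) - h(x-α))/((f(x)-f(x-α))² + α²) dα (with f Lipschitz), one has φ'(g(x)) · L_f[g](x) ≥ L_f[φ∘g](x) whenever both principal values exist. -/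
open Real MeasureTheory Set Filter Topology

lemma tangent_line_aux (φ : ℝ → ℝ) (hc : ConvexOn ℝ Set.univ φ)
    (hd : Differentiable ℝ φ) (a b : ℝ) :
    φ a - φ b ≤ deriv φ a * (a - b) := by
  rcases lt_trichotomy a b with h | h | h
  · have h1 := hc.deriv_le_slope (mem_univ a) (mem_univ b) h (hd a)
    rw [slope_def_field] at h1
    have hba : (0:ℝ) < b - a := by linarith
    rw [le_div_iff₀ hba] at h1
    nlinarith
  · simp [h]
  · have h1 := hc.slope_le_deriv (mem_univ b) (mem_univ a) h (hd a)
    rw [slope_def_field] at h1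
    have hab : (0:ℝ) < a - b := by linarith
    rw [div_le_iff₀ hab] at h1
    linarith

theorem stmt_14 (f g φ : ℝ → ℝ) (K : ℝ)
    (hf : ∀ x y : ℝ, |f x - f y| ≤ K * |x - y|)
    (hg_meas : Measurable g) (hg_bdd : ∃ Cg : ℝ, ∀ x, |g x| ≤ Cg)
    (hφ_convex : ConvexOn ℝ Set.univ φ)
    (hφ_diff : Differentiable ℝ φ)
    (x : ℝ) (Lg Lφg : ℝ)
    (hLg : Tendsto (fun ε : ℝ =>
        ∫ α in {a : ℝ | ε ≤ |a|},
          (g x - g (x - α)) / ((f x - f (x - α))^2 + α^2))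
      (nhdsWithin 0 (Ioi 0)) (nhds Lg))
    (hLφg : Tendsto (fun ε : ℝ =>
        ∫ α in {a : ℝ | ε ≤ |a|},
          (φ (g x) - φ (g (x - α))) / ((f x - f (x - α))^2 + α^2))
      (nhdsWithin 0 (Ioi 0)) (nhds Lφg)) :
    deriv φ (g x) * Lg ≥ Lφg := by
  obtain ⟨Cg, hCg⟩ := hg_bdd
  set c : ℝ := deriv φ (g x) with hc
  have hφcont : Continuous φ := hφ_diff.continuous
  obtain ⟨Cφ, hCφ⟩ := (isCompact_Icc (a := -Cg) (b := Cg)).exists_bound_of_continuousOn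
    hφcont.continuousOn
  -- continuity of f
  have hfc : Continuous f := by
    rcases le_or_gt K 0 with hK | hK
    · have : ∀ y, f y = f 0 := by
        intro y
        have h1 := hf y 0
        have h2 : K * |y - 0| ≤ 0 := mul_nonpos_of_nonpos_of_nonneg hK (abs_nonneg _)
        have := abs_nonneg (f y - f 0)
        have : |f y - f 0| = 0 := le_antisymm (h1.trans h2) (abs_nonneg _)
        have := abs_eq_zero.mp this
        linarith
      have : f = fun _ => f 0 := funext this
      rw [this]; exact continuous_const
    · exact (LipschitzWith.of_dist_le_mul (K := ⟨K, hK.le⟩) (fun a b => by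
        rw [Real.dist_eq, Real.dist_eq]; exact hf a b)).continuous
  -- denominators
  set D : ℝ → ℝ := fun α => (f x - f (x - α))^2 + α^2 with hD
  have hDpos : ∀ α : ℝ, α ≠ 0 → 0 < D α := by
    intro α hα
    have : 0 < α^2 := by positivity
    have := sq_nonneg (f x - f (x - α))
    simp only [hD]; linarith
  -- pointwise inequality
  have hpt : ∀ α : ℝ, (φ (g x) - φ (g (x - α))) / D α ≤ c * ((g x - g (x - α)) / D α) := by
    intro α
    by_cases hα : α = 0
    · subst hα; simp
    · have hpos := hDpos α hα
      rw [mul_div_assoc']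
      gcongr
      exact tangent_line_aux φ hφ_convex hφ_diff (g x) (g (x - α))
  -- bound constant
  set M : ℝ := max (2 * Cφ) (2 * Cg) with hM
  have hM1 : 2 * Cφ ≤ M := le_max_left _ _
  have hM2 : 2 * Cg ≤ M := le_max_right _ _
  -- integrability of the majorant on {a | ε ≤ |a|}
  have hmaj : ∀ ε : ℝ, 0 < ε → IntegrableOn (fun α : ℝ => M / α ^ 2) {a : ℝ | ε ≤ |a|} := by
    intro ε hε
    have hset : {a : ℝ | ε ≤ |a|} = Iic (-ε) ∪ Ici ε := by
      ext a
      simp only [mem_setOf_eq, mem_union, mem_Iic, mem_Ici, le_abs]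
      constructor
      · rintro (h | h); · right; exact h
        · left; linarith
      · rintro (h | h); · right; linarith
        · left; exact h
    have hIci : IntegrableOn (fun α : ℝ => M / α ^ 2) (Ici ε) := by
      rw [integrableOn_Ici_iff_integrableOn_Ioi]
      have h1 : IntegrableOn (fun α : ℝ => α ^ (-2 : ℝ)) (Ioi ε) :=
        integrableOn_Ioi_rpow_of_lt (by norm_num) hε
      have h2 := h1.const_mul M
      apply IntegrableOn.congr_fun h2 ?_ measurableSet_Ioi
      intro a ha
      have ha' : (0:ℝ) < a := hε.trans ha
      show M * a ^ (-2:ℝ) = M / a ^ 2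
      rw [Real.rpow_neg ha'.le, div_eq_mul_inv, ← Real.rpow_natCast a 2]
      norm_num
    have hIic : IntegrableOn (fun α : ℝ => M / α ^ 2) (Iic (-ε)) := by
      rw [← (Measure.measurePreserving_neg (volume : Measure ℝ)).integrableOn_comp_preimage
          (Homeomorph.neg ℝ).measurableEmbedding]
      simp only [Function.comp_def, neg_preimage, neg_Iic, neg_neg]
      simpa using hIci
    rw [hset]
    exact hIic.union hIci
  -- the two integrands are integrable on {a | ε ≤ |a|}
  have key : ∀ ε : ℝ, 0 < ε →
      (∫ α in {a : ℝ | ε ≤ |a|}, (φ (g x) - φ (g (x - α))) / D α) ≤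
      c * ∫ α in {a : ℝ | ε ≤ |a|}, (g x - g (x - α)) / D α := by
    intro ε hε
    have hSmeas : MeasurableSet {a : ℝ | ε ≤ |a|} := by
      apply measurableSet_le measurable_const _root_.measurable_abs
    have hmeas_g : Measurable fun α : ℝ => (g x - g (x - α)) / D α := by
      apply Measurable.div
      · exact measurable_const.sub (hg_meas.comp (measurable_const.sub measurable_id))
      · apply Measurable.add
        · exact ((measurable_const.sub (hfc.measurable.comp
            (measurable_const.sub measurable_id))).pow measurable_const)
        · exact measurable_id.pow measurable_const
    have hmeas_φ : Measurable fun α : ℝ => (φ (g x) - φ (g (x - α))) / D α := by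
      apply Measurable.div
      · exact measurable_const.sub ((hφcont.measurable.comp hg_meas).comp
          (measurable_const.sub measurable_id))
      · apply Measurable.add
        · exact ((measurable_const.sub (hfc.measurable.comp
            (measurable_const.sub measurable_id))).pow measurable_const)
        · exact measurable_id.pow measurable_const
    have hbd : ∀ α ∈ {a : ℝ | ε ≤ |a|}, ∀ (num : ℝ), |num| ≤ M →
        |num / D α| ≤ M / α ^ 2 := by
      intro α hα num hnum
      have hα0 : α ≠ 0 := by
        intro h; rw [h] at hα; simp only [mem_setOf_eq, abs_zero] at hα; linarith
      have hαsq : (0:ℝ) < α ^ 2 := by positivity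
      have hDge : α ^ 2 ≤ D α := by
        have := sq_nonneg (f x - f (x - α)); simp only [hD]; linarith
      have hDpos' := hDpos α hα0
      rw [abs_div, abs_of_pos hDpos']
      calc |num| / D α ≤ |num| / α ^ 2 := by gcongr
        _ ≤ M / α ^ 2 := by gcongr
    have hint_g : IntegrableOn (fun α : ℝ => (g x - g (x - α)) / D α) {a : ℝ | ε ≤ |a|} := by
      apply Integrable.mono' (hmaj ε hε) hmeas_g.aestronglyMeasurable
      filter_upwards [ae_restrict_mem hSmeas] with α hα
      apply hbd α hα
      have h1 := hCg x
      have h2 := hCg (x - α)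
      calc |g x - g (x - α)| ≤ |g x| + |g (x - α)| := abs_sub _ _
        _ ≤ 2 * Cg := by linarith
        _ ≤ M := hM2
    have hint_φ : IntegrableOn (fun α : ℝ => (φ (g x) - φ (g (x - α))) / D α) {a : ℝ | ε ≤ |a|} := by
      apply Integrable.mono' (hmaj ε hε) hmeas_φ.aestronglyMeasurable
      filter_upwards [ae_restrict_mem hSmeas] with α hα
      apply hbd α hα
      have h1 : |φ (g x)| ≤ Cφ := hCφ (g x) (abs_le.mp (hCg x))
      have h2 : |φ (g (x - α))| ≤ Cφ := hCφ (g (x - α)) (abs_le.mp (hCg (x - α)))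
      calc |φ (g x) - φ (g (x - α))| ≤ |φ (g x)| + |φ (g (x - α))| := abs_sub _ _
        _ ≤ 2 * Cφ := by linarith
        _ ≤ M := hM1
    rw [← integral_const_mul]
    exact integral_mono hint_φ (hint_g.const_mul c) hpt
  -- pass to the limit
  have h1 : Tendsto (fun ε : ℝ =>
      c * ∫ α in {a : ℝ | ε ≤ |a|}, (g x - g (x - α)) / D α)
      (nhdsWithin 0 (Ioi 0)) (nhds (c * Lg)) := hLg.const_mul c
  have : Lφg ≤ c * Lg := by
    apply le_of_tendsto_of_tendsto hLφg h1
    filter_upwards [self_mem_nhdsWithin] with ε hε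
    exact key ε hε
  exact this
end

section
/- Let f : ℝ → ℝ be Lipschitz and g ∈ L¹(ℝ) bounded and such that (x,α) ↦ (g(x)-g(x-α))/((f(x)-f(x-α))²+α²) is integrable on ℝ × {|α| > ε} for each ε > 0 with uniform bounds. Then ∫_ℝ L_f[g](x) dx = 0, where L_f[g](x) = p.v.∫_ℝ (g(x)-g(x-α))/((f(x)-f(x-α))²+α²) dα. -/
/-!
The substitution `(x, α) ↦ (x - α, -α)` preserves Lebesgue measure on `ℝ × ℝ` and each region
`{ε ≤ |α|}`, and it changes the sign of the integrand, because the kernel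
`K(x, α) = 1 / ((f x - f (x - α))² + α²)` is invariant under it while `g x - g (x - α)` is odd.
Hence every truncated double integral vanishes, and so does its limit `∫ L`.
-/

open Real MeasureTheory Set Filter Topology

namespace MeasureTheory

open scoped Pointwise

variable {G E : Type*} [MeasurableSpace G] [AddGroup G] [MeasurableAdd₂ G] [MeasurableNeg G]
  {μ : Measure G} [SFinite μ] [μ.IsAddRightInvariant] [μ.IsNegInvariant]
  [NormedAddCommGroup E] [NormedSpace ℝ E]

theorem measurePreserving_sub_prod_neg :
    MeasurePreserving (fun z : G × G => (z.1 - z.2, -z.2)) (μ.prod μ) (μ.prod μ) :=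
  ((MeasurePreserving.id μ).prod (Measure.measurePreserving_neg μ)).comp
    (measurePreserving_sub_prod μ μ)

theorem setIntegral_prod_eq_zero_of_antisymm {F : G × G → E} {T : Set (G × G)}
    (hT : (fun z : G × G => (z.1 - z.2, -z.2)) ⁻¹' T = T)
    (hF : ∀ x a, F (x - a, -a) = -F (x, a)) :
    ∫ z in T, F z ∂μ.prod μ = 0 := by
  have hinv : Function.Involutive fun z : G × G => (z.1 - z.2, -z.2) := fun z => by simp
  have hemb := (MeasurableEquiv.ofInvolutive _ hinv
    (measurePreserving_sub_prod_neg (μ := μ)).measurable).measurableEmbedding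
  have h := (measurePreserving_sub_prod_neg (μ := μ)).setIntegral_preimage_emb hemb F T
  simp only [hT, hF, integral_neg] at h
  have : IsAddTorsionFree E := .of_isTorsionFree ℝ E
  exact neg_eq_self.mp h

theorem integral_setIntegral_eq_zero_of_antisymm {F : G × G → E} {S : Set G} (hS : -S = S)
    (hF : ∀ x a, F (x - a, -a) = -F (x, a)) (hint : IntegrableOn F (univ ×ˢ S) (μ.prod μ)) :
    ∫ x, ∫ a in S, F (x, a) ∂μ ∂μ = 0 := by
  have hT : (fun z : G × G => (z.1 - z.2, -z.2)) ⁻¹' (univ ×ˢ S) = univ ×ˢ S := by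
    ext z; simp [← Set.mem_neg, hS]
  rw [← setIntegral_univ, ← setIntegral_prod F hint]
  exact setIntegral_prod_eq_zero_of_antisymm hT hF

end MeasureTheory

noncomputable def kernelDiff (f g : ℝ → ℝ) (q : ℝ × ℝ) : ℝ :=
  (g q.1 - g (q.1 - q.2)) / ((f q.1 - f (q.1 - q.2)) ^ 2 + q.2 ^ 2)

theorem kernelDiff_sub_neg (f g : ℝ → ℝ) (x α : ℝ) :
    kernelDiff f g (x - α, -α) = -kernelDiff f g (x, α) := by
  unfold kernelDiff
  ring_nf

theorem integral_setIntegral_kernelDiff_eq_zero (f g : ℝ → ℝ) (ε : ℝ)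
    (hint : IntegrableOn (kernelDiff f g) {q : ℝ × ℝ | ε ≤ |q.2|}) :
    ∫ x, ∫ α in {a : ℝ | ε ≤ |a|}, kernelDiff f g (x, α) = 0 := by
  refine integral_setIntegral_eq_zero_of_antisymm (μ := volume) ?_ (kernelDiff_sub_neg f g) ?_
  · ext a; simp
  · rwa [univ_prod, ← Measure.volume_eq_prod]

theorem stmt_15_general (f g L : ℝ → ℝ)
    (hint : ∀ ε : ℝ, 0 < ε → IntegrableOn
        (fun q : ℝ × ℝ =>
          (g q.1 - g (q.1 - q.2)) / ((f q.1 - f (q.1 - q.2))^2 + q.2^2))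
        {q : ℝ × ℝ | ε ≤ |q.2|})
    (hunif : Tendsto (fun ε : ℝ =>
        ∫ x : ℝ, ∫ α in {a : ℝ | ε ≤ |a|},
          (g x - g (x - α)) / ((f x - f (x - α))^2 + α^2))
      (nhdsWithin 0 (Ioi 0)) (nhds (∫ x : ℝ, L x))) :
    ∫ x : ℝ, L x = 0 := by
  refine tendsto_nhds_unique hunif (tendsto_const_nhds.congr' ?_)
  filter_upwards [self_mem_nhdsWithin] with ε hε
  exact (integral_setIntegral_kernelDiff_eq_zero f g ε (hint ε hε)).symm

theorem stmt_15 (f g L : ℝ → ℝ) (K Cg : ℝ)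
    (hf : ∀ x y : ℝ, |f x - f y| ≤ K * |x - y|)
    (hg_int : Integrable g) (hg_bdd : ∀ x, |g x| ≤ Cg)
    (hpv : ∀ x : ℝ, Tendsto (fun ε : ℝ =>
        ∫ α in {a : ℝ | ε ≤ |a|},
          (g x - g (x - α)) / ((f x - f (x - α))^2 + α^2))
      (nhdsWithin 0 (Ioi 0)) (nhds (L x)))
    (hint : ∀ ε : ℝ, 0 < ε → IntegrableOn
        (fun q : ℝ × ℝ =>
          (g q.1 - g (q.1 - q.2)) / ((f q.1 - f (q.1 - q.2))^2 + q.2^2))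
        {q : ℝ × ℝ | ε ≤ |q.2|})
    (hL_int : Integrable L)
    (hunif : Tendsto (fun ε : ℝ =>
        ∫ x : ℝ, ∫ α in {a : ℝ | ε ≤ |a|},
          (g x - g (x - α)) / ((f x - f (x - α))^2 + α^2))
      (nhdsWithin 0 (Ioi 0)) (nhds (∫ x : ℝ, L x))) :
    ∫ x : ℝ, L x = 0 :=
  stmt_15_general f g L hint hunif
end

section
/- Rademacher-type lemma for running maxima: let f : ℝ × [0,∞) → ℝ be such that t ↦ f(x,t) is L-Lipschitz uniformly in x, ∂_t f(x,t) exists for every (x,t), and for every t there exists x(t) with f(x(t),t) = M(t) := sup_x f(x,t) < ∞. Then M is L-Lipschitz, hence differentiable almost everywhere, and M'(t) = ∂_t f(x(t), t) at every point t of differentiability of M. -/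
/-!
Each competitor `t ↦ f x t` is `L`-Lipschitz and lies below the running maximum `M`, with equality
at `t = s` when `x = X s`; comparing `M t` and `M s` through the maximisers `X s` and `X t` shows
that `M` is `L`-Lipschitz, so Rademacher's theorem makes it differentiable almost everywhere.
At a point `t` where `M` is differentiable, `M - f (X t)` attains a local minimum `0` at `t`, so
its derivative vanishes there.
-/

open Real MeasureTheory Set Filter Topology

theorem abs_sub_le_of_forall_le_argmax {ι α : Type*} [PseudoMetricSpace α] {f : ι → α → ℝ}
    {X : α → ι} {s : Set α} {L : ℝ}
    (hf : ∀ i, ∀ t ∈ s, ∀ u ∈ s, |f i t - f i u| ≤ L * dist t u)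
    (hX : ∀ t ∈ s, ∀ i, f i t ≤ f (X t) t) :
    ∀ t ∈ s, ∀ u ∈ s, |f (X t) t - f (X u) u| ≤ L * dist t u := by
  intro t ht u hu
  rw [abs_sub_le_iff]
  constructor
  · calc f (X t) t - f (X u) u ≤ f (X t) t - f (X t) u := by linarith [hX u hu (X t)]
      _ ≤ |f (X t) t - f (X t) u| := le_abs_self _
      _ ≤ L * dist t u := hf (X t) t ht u hu
  · calc f (X u) u - f (X t) t ≤ f (X u) u - f (X u) t := by linarith [hX t ht (X u)]
      _ ≤ |f (X u) u - f (X u) t| := le_abs_self _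
      _ ≤ L * dist t u := by rw [dist_comm]; exact hf (X u) u hu t ht

theorem LipschitzOnWith.ae_differentiableAt_of_isOpen {E F : Type*} [NormedAddCommGroup E]
    [NormedSpace ℝ E] [FiniteDimensional ℝ E] [MeasurableSpace E] [BorelSpace E]
    [NormedAddCommGroup F] [NormedSpace ℝ F] [FiniteDimensional ℝ F] {μ : Measure E}
    [μ.IsAddHaarMeasure] {C : NNReal} {f : E → F} {s : Set E}
    (hf : LipschitzOnWith C f s) (hs : IsOpen s) :
    ∀ᵐ x ∂μ, x ∈ s → DifferentiableAt ℝ f x := by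
  filter_upwards [hf.ae_differentiableWithinAt_of_mem] with x hx hxs
  exact (hx hxs).differentiableAt (hs.mem_nhds hxs)

theorem deriv_eq_of_eventuallyLE_of_eq {f g : ℝ → ℝ} {t : ℝ} (hle : g ≤ᶠ[𝓝 t] f)
    (heq : g t = f t) (hf : DifferentiableAt ℝ f t) (hg : DifferentiableAt ℝ g t) :
    deriv f t = deriv g t := by
  have hmin : IsLocalMin (fun τ => f τ - g τ) t := by
    filter_upwards [hle] with τ hτ
    linarith
  have := hmin.deriv_eq_zero
  rw [deriv_fun_sub hf hg] at this
  linarith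

theorem stmt_19_general (f : ℝ → ℝ → ℝ) (L : ℝ)
    (hlip : ∀ x : ℝ, ∀ t ∈ Ici (0:ℝ), ∀ s ∈ Ici (0:ℝ),
      |f x t - f x s| ≤ L * |t - s|)
    (hdt : ∀ (x : ℝ), ∀ t ∈ Ici (0:ℝ), DifferentiableAt ℝ (f x) t)
    (X : ℝ → ℝ)
    (hX : ∀ t ∈ Ici (0:ℝ), ∀ x : ℝ, f x t ≤ f (X t) t) :
    (∀ t ∈ Ici (0:ℝ), ∀ s ∈ Ici (0:ℝ),
      |f (X t) t - f (X s) s| ≤ L * |t - s|) ∧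
    (∀ᵐ t : ℝ, t ∈ Ioi (0:ℝ) →
      DifferentiableAt ℝ (fun τ => f (X τ) τ) t) ∧
    (∀ t ∈ Ioi (0:ℝ), DifferentiableAt ℝ (fun τ => f (X τ) τ) t →
      deriv (fun τ => f (X τ) τ) t = deriv (f (X t)) t) := by
  have hM : ∀ t ∈ Ici (0:ℝ), ∀ s ∈ Ici (0:ℝ), |f (X t) t - f (X s) s| ≤ L * |t - s| := by
    have hlip' : ∀ x, ∀ t ∈ Ici (0:ℝ), ∀ s ∈ Ici (0:ℝ), |f x t - f x s| ≤ L * dist t s := by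
      simpa only [Real.dist_eq] using hlip
    simpa only [Real.dist_eq] using abs_sub_le_of_forall_le_argmax hlip' hX
  refine ⟨hM, ?_, fun t ht hdM => ?_⟩
  · have hMlip : LipschitzOnWith L.toNNReal (fun τ => f (X τ) τ) (Ioi 0) :=
      (LipschitzOnWith.of_dist_le' (by simpa only [Real.dist_eq] using hM)).mono
        Ioi_subset_Ici_self
    exact hMlip.ae_differentiableAt_of_isOpen isOpen_Ioi
  · refine deriv_eq_of_eventuallyLE_of_eq ?_ rfl hdM (hdt (X t) t (Ioi_subset_Ici_self ht))
    filter_upwards [Ici_mem_nhds ht] with τ hτ using hX τ hτ (X t)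

theorem stmt_19 (f : ℝ → ℝ → ℝ) (L : ℝ) (hL : 0 ≤ L)
    (hlip : ∀ x : ℝ, ∀ t ∈ Ici (0:ℝ), ∀ s ∈ Ici (0:ℝ),
      |f x t - f x s| ≤ L * |t - s|)
    (hdt : ∀ (x : ℝ), ∀ t ∈ Ici (0:ℝ), DifferentiableAt ℝ (f x) t)
    (X : ℝ → ℝ)
    (hX : ∀ t ∈ Ici (0:ℝ), ∀ x : ℝ, f x t ≤ f (X t) t) :
    (∀ t ∈ Ici (0:ℝ), ∀ s ∈ Ici (0:ℝ),
      |f (X t) t - f (X s) s| ≤ L * |t - s|) ∧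
    (∀ᵐ t : ℝ, t ∈ Ioi (0:ℝ) →
      DifferentiableAt ℝ (fun τ => f (X τ) τ) t) ∧
    (∀ t ∈ Ioi (0:ℝ), DifferentiableAt ℝ (fun τ => f (X τ) τ) t →
      deriv (fun τ => f (X τ) τ) t = deriv (f (X t)) t) :=
  stmt_19_general f L hlip hdt X hX
end
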